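/- arXiv:2007.09765 — 8 statements merged into one kernel-verified Lean document; each statement's English description precedes it below -/
import Mathlib

section
/- Let K be a cap body of the unit ball in E^d with vertex set V, and let v ∈ V be a vertex. A unit vector u ∈ S^{d-1} illuminates v (i.e., there exists λ > 0 with v + λu ∈ int K) if and only if ⟨v, u⟩ < -√(‖v‖² - 1). -/
open scoped RealInnerProductSpace

namespace CapBodyAux

variable {E : Type*} [NormedAddCommGroup E] [InnerProductSpace ℝ E]

lemma norm_add_smul_sq (v w : E) (t : ℝ) :
    ‖v + t • w‖ ^ 2 = ‖v‖ ^ 2 + 2 * t * ⟪v, w⟫ + t ^ 2 * ‖w‖ ^ 2 := by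
  rw [norm_add_sq_real, real_inner_smul_right, norm_smul, Real.norm_eq_abs, mul_pow, sq_abs]
  ring

/-- The solid tangent cone from `v` over the unit ball, as a sublevel set of a convex function. -/
def cone (v : E) : Set E :=
  {x | Real.sqrt (‖v‖ ^ 2 - 1) * ‖x - v‖ + ⟪v, x - v⟫ ≤ 0}

lemma cone_convex (v : E) : Convex ℝ (cone v) := by
  intro x hx y hy a b ha hb hab
  simp only [cone, Set.mem_setOf_eq] at hx hy ⊢
  have h1 : a • x + b • y - v = a • (x - v) + b • (y - v) := by
    match_scalars <;> linarith
  rw [h1]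
  have h2 : ‖a • (x - v) + b • (y - v)‖ ≤ a * ‖x - v‖ + b * ‖y - v‖ := by
    calc ‖a • (x - v) + b • (y - v)‖ ≤ ‖a • (x - v)‖ + ‖b • (y - v)‖ := norm_add_le _ _
    _ = a * ‖x - v‖ + b * ‖y - v‖ := by
        rw [norm_smul, norm_smul, Real.norm_eq_abs, Real.norm_eq_abs,
          abs_of_nonneg ha, abs_of_nonneg hb]
  have h3 : ⟪v, a • (x - v) + b • (y - v)⟫ = a * ⟪v, x - v⟫ + b * ⟪v, y - v⟫ := by
    rw [inner_add_right, real_inner_smul_right, real_inner_smul_right]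
  rw [h3]
  nlinarith [mul_le_mul_of_nonneg_left h2 (Real.sqrt_nonneg (‖v‖ ^ 2 - 1)),
    mul_le_mul_of_nonneg_left hx ha, mul_le_mul_of_nonneg_left hy hb]

lemma ball_subset_cone {v : E} (hv : 1 < ‖v‖) {b : E} (hb : ‖b‖ ≤ 1) : b ∈ cone v := by
  simp only [cone, Set.mem_setOf_eq]
  have hn1 : 1 < ‖v‖ ^ 2 := by nlinarith
  have hbv : ‖b - v‖ ^ 2 = ‖b‖ ^ 2 - 2 * ⟪v, b⟫ + ‖v‖ ^ 2 := by
    rw [norm_sub_sq_real, real_inner_comm]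
  have hvb : ⟪v, b - v⟫ = ⟪v, b⟫ - ‖v‖ ^ 2 := by
    rw [inner_sub_right, real_inner_self_eq_norm_sq]
  have hs : ⟪v, b⟫ ≤ ‖v‖ * ‖b‖ := real_inner_le_norm v b
  have hpos : 0 < ‖v‖ ^ 2 - ⟪v, b⟫ := by nlinarith [norm_nonneg b, norm_nonneg v]
  have hsq : Real.sqrt (‖v‖ ^ 2 - 1) ^ 2 = ‖v‖ ^ 2 - 1 := Real.sq_sqrt (by linarith)
  have key : (Real.sqrt (‖v‖ ^ 2 - 1) * ‖b - v‖) ^ 2 ≤ (‖v‖ ^ 2 - ⟪v, b⟫) ^ 2 := by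
    have hb2 : ‖b‖ ^ 2 ≤ 1 := by nlinarith [norm_nonneg b]
    rw [mul_pow, hsq, hbv]
    nlinarith [sq_nonneg (⟪v, b⟫ - 1),
      mul_nonneg (by linarith : (0:ℝ) ≤ ‖v‖ ^ 2 - 1) (by linarith : (0:ℝ) ≤ 1 - ‖b‖ ^ 2)]
  have h4 : Real.sqrt (‖v‖ ^ 2 - 1) * ‖b - v‖ ≤ ‖v‖ ^ 2 - ⟪v, b⟫ := by
    nlinarith [mul_nonneg (Real.sqrt_nonneg (‖v‖ ^ 2 - 1)) (norm_nonneg (b - v))]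
  rw [hvb]; linarith

lemma vertex_mem_cone {v w : E} (hv : 1 < ‖v‖) {p : E} (hp : p ∈ segment ℝ v w)
    (hpb : ‖p‖ ≤ 1) : w ∈ cone v := by
  obtain ⟨a, b, ha, hb, hab, hP⟩ := hp
  have hb0 : 0 < b := by
    rcases lt_or_eq_of_le hb with h | h
    · exact h
    · exfalso
      have ha1 : a = 1 := by linarith
      rw [← h, ha1, one_smul, zero_smul, add_zero] at hP
      rw [← hP] at hpb; linarith
  have hpv : p - v = b • (w - v) := by
    rw [← hP]; match_scalars <;> linarith
  have hpc := ball_subset_cone hv hpb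
  simp only [cone, Set.mem_setOf_eq] at hpc ⊢
  rw [hpv, norm_smul, real_inner_smul_right, Real.norm_eq_abs, abs_of_pos hb0] at hpc
  nlinarith [Real.sqrt_nonneg (‖v‖ ^ 2 - 1), norm_nonneg (w - v)]

end CapBodyAux

set_option maxHeartbeats 1000000 in
/-- For a cap body `K = conv(B ∪ V)` of the unit ball in `E^d` and a vertex
`v ∈ V`, a unit direction `u` illuminates `v` iff `⟪v, u⟫ < -√(‖v‖² - 1)`. -/
theorem capBody_vertex_illuminated_iff {d : ℕ} (hd : 2 ≤ d)
    (V : Set (EuclideanSpace ℝ (Fin d))) (hVfin : V.Finite)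
    (hVout : ∀ v ∈ V, 1 < ‖v‖)
    (hVseg : ∀ v ∈ V, ∀ w ∈ V, v ≠ w →
      (segment ℝ v w ∩ Metric.closedBall (0 : EuclideanSpace ℝ (Fin d)) 1).Nonempty)
    (K : Set (EuclideanSpace ℝ (Fin d)))
    (hK : K = convexHull ℝ (Metric.closedBall (0 : EuclideanSpace ℝ (Fin d)) 1 ∪ V))
    (v : EuclideanSpace ℝ (Fin d)) (hv : v ∈ V)
    (u : EuclideanSpace ℝ (Fin d)) (hu : ‖u‖ = 1) :
    (∃ l : ℝ, 0 < l ∧ v + l • u ∈ interior K) ↔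
      ⟪v, u⟫ < -Real.sqrt (‖v‖ ^ 2 - 1) := by
  have hv1 : 1 < ‖v‖ := hVout v hv
  have hn1 : 1 < ‖v‖ ^ 2 := by nlinarith
  have hsq : Real.sqrt (‖v‖ ^ 2 - 1) ^ 2 = ‖v‖ ^ 2 - 1 := Real.sq_sqrt (by linarith)
  have hsqpos : 0 < Real.sqrt (‖v‖ ^ 2 - 1) := Real.sqrt_pos.mpr (by linarith)
  set c : ℝ := ⟪v, u⟫ with hcdef
  constructor
  · rintro ⟨l, hl, hint⟩
    by_contra hcon
    push_neg at hcon
    -- K is contained in the cone over the ball with apex v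
    have hKC : K ⊆ CapBodyAux.cone v := by
      rw [hK]
      apply convexHull_min _ (CapBodyAux.cone_convex v)
      rintro x (hx | hx)
      · exact CapBodyAux.ball_subset_cone hv1 (mem_closedBall_zero_iff.mp hx)
      · by_cases hxv : x = v
        · subst hxv; simp [CapBodyAux.cone]
        · obtain ⟨p, hpseg, hpball⟩ := hVseg v hv x hx (Ne.symm hxv)
          exact CapBodyAux.vertex_mem_cone hv1 hpseg (mem_closedBall_zero_iff.mp hpball)
    obtain ⟨r, hr, hball⟩ := Metric.mem_nhds_iff.mp (mem_interior_iff_mem_nhds.mp hint)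
    by_cases hc0 : 0 ≤ c
    · have hx : v + l • u ∈ CapBodyAux.cone v := hKC (interior_subset hint)
      simp only [CapBodyAux.cone, Set.mem_setOf_eq, add_sub_cancel_left] at hx
      rw [norm_smul, real_inner_smul_right, Real.norm_eq_abs, abs_of_pos hl, hu] at hx
      nlinarith
    · push_neg at hc0
      have hc2 : c ^ 2 ≤ ‖v‖ ^ 2 - 1 := by
        have h1 : 0 ≤ c + Real.sqrt (‖v‖ ^ 2 - 1) := by linarith
        have h2 : 0 < Real.sqrt (‖v‖ ^ 2 - 1) - c := by linarith
        nlinarith [mul_nonneg h1 h2.le]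
      set ε : ℝ := min (min (-c / ‖v‖ ^ 2) (-1 / (4 * c))) (r / (l * (‖v‖ + 1))) with hεdef
      have hA : 0 < -c / ‖v‖ ^ 2 := div_pos (by linarith) (by positivity)
      have hB : 0 < -1 / (4 * c) := div_pos_of_neg_of_neg (by norm_num) (by linarith)
      have hC : 0 < r / (l * (‖v‖ + 1)) :=
        div_pos hr (mul_pos hl (by positivity))
      have hε1 : 0 < ε := lt_min (lt_min hA hB) hC
      have hεa : ε * ‖v‖ ^ 2 ≤ -c := by
        have h' : ε ≤ -c / ‖v‖ ^ 2 := le_trans (min_le_left _ _) (min_le_left _ _)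
        exact (le_div_iff₀ (by positivity)).mp h'
      have hεb : -(1 : ℝ) / 2 ≤ 2 * ε * c := by
        have h' : ε ≤ -1 / (4 * c) := le_trans (min_le_left _ _) (min_le_right _ _)
        have he : (-1 : ℝ) / (4 * c) = 1 / (4 * (-c)) := by
          rw [div_eq_div_iff (by linarith) (by linarith)]; ring
        rw [he] at h'
        have := (le_div_iff₀ (by linarith : (0:ℝ) < 4 * (-c))).mp h'
        nlinarith
      have hεc : l * ε * ‖v‖ < r := by
        have h' : ε ≤ r / (l * (‖v‖ + 1)) := min_le_right _ _
        have := (le_div_iff₀ (mul_pos hl (by positivity))).mp h'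
        nlinarith [mul_pos hl hε1, norm_nonneg v]
      set u' : EuclideanSpace ℝ (Fin d) := u + ε • v with hu'def
      have hcu' : ⟪v, u'⟫ = c + ε * ‖v‖ ^ 2 := by
        rw [hu'def, inner_add_right, real_inner_smul_right, real_inner_self_eq_norm_sq, hcdef]
      have hnu' : ‖u'‖ ^ 2 = 1 + 2 * ε * c + ε ^ 2 * ‖v‖ ^ 2 := by
        rw [hu'def, CapBodyAux.norm_add_smul_sq, hu, real_inner_comm, ← hcdef]; ring
      have ha2 : (1 : ℝ) / 2 ≤ ‖u'‖ ^ 2 := by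
        rw [hnu']
        nlinarith [mul_nonneg (sq_nonneg ε) (sq_nonneg ‖v‖)]
      have hu'pos : 0 < ‖u'‖ := by nlinarith [norm_nonneg u']
      have hD : (c + ε * ‖v‖ ^ 2) ^ 2 < ‖u'‖ ^ 2 * (‖v‖ ^ 2 - 1) := by
        rw [hnu']
        have h1 : 2 * c + ε * ‖v‖ ^ 2 ≤ c := by linarith
        have h2 : ε * (2 * c + ε * ‖v‖ ^ 2) ≤ ε * c :=
          mul_le_mul_of_nonneg_left h1 hε1.le
        have h3 : 0 < ε * (-c) := mul_pos hε1 (by linarith)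
        nlinarith
      set x' : EuclideanSpace ℝ (Fin d) := v + l • u + (l * ε) • v with hx'def
      have hx'ball : x' ∈ Metric.ball (v + l • u) r := by
        rw [Metric.mem_ball, dist_eq_norm, hx'def, add_sub_cancel_left, norm_smul,
          Real.norm_eq_abs, abs_of_pos (mul_pos hl hε1)]
        exact lt_of_le_of_lt (le_of_eq (by ring)) hεc
      have hx'C : x' ∈ CapBodyAux.cone v := hKC (hball hx'ball)
      have hx'v : x' - v = l • u' := by
        rw [hx'def, hu'def, smul_add, smul_smul]; abel
      simp only [CapBodyAux.cone, Set.mem_setOf_eq] at hx'C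
      rw [hx'v, norm_smul, real_inner_smul_right, Real.norm_eq_abs, abs_of_pos hl, hcu']
        at hx'C
      have hkey : Real.sqrt (‖v‖ ^ 2 - 1) * ‖u'‖ ≤ -(c + ε * ‖v‖ ^ 2) := by nlinarith
      have h5 : 0 < Real.sqrt (‖v‖ ^ 2 - 1) * ‖u'‖ := mul_pos hsqpos hu'pos
      have h6 : Real.sqrt (‖v‖ ^ 2 - 1) ^ 2 * ‖u'‖ ^ 2 = (‖v‖ ^ 2 - 1) * ‖u'‖ ^ 2 := by
        rw [hsq]
      nlinarith [mul_le_mul hkey hkey h5.le (by linarith : (0:ℝ) ≤ -(c + ε * ‖v‖ ^ 2))]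
  · intro hcu
    have hvK : v ∈ K := by rw [hK]; exact subset_convexHull ℝ _ (Or.inr hv)
    have hc0 : c < 0 := by linarith
    have hcsq : ‖v‖ ^ 2 - 1 < c ^ 2 := by
      have h1 : 0 < -c - Real.sqrt (‖v‖ ^ 2 - 1) := by linarith
      nlinarith [mul_pos h1 (by linarith : (0:ℝ) < -c + Real.sqrt (‖v‖ ^ 2 - 1))]
    have hb : ‖v + (-c) • u‖ ^ 2 < 1 := by
      rw [CapBodyAux.norm_add_smul_sq, hu, ← hcdef]; nlinarith
    have hbi : v + (-c) • u ∈ interior K := by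
      have h1 : v + (-c) • u ∈ Metric.ball (0 : EuclideanSpace ℝ (Fin d)) 1 := by
        rw [mem_ball_zero_iff]
        nlinarith [norm_nonneg (v + (-c) • u)]
      have h2 : Metric.ball (0 : EuclideanSpace ℝ (Fin d)) 1 ⊆ interior K := by
        refine subset_trans Metric.ball_subset_interior_closedBall (interior_mono ?_)
        rw [hK]
        exact subset_trans Set.subset_union_left (subset_convexHull ℝ _)
      exact h2 h1
    refine ⟨-c / 2, by linarith, ?_⟩
    have hKconv : Convex ℝ K := hK ▸ convex_convexHull ℝ _
    have hcomb := hKconv.combo_interior_self_mem_interior hbi hvK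
      (by norm_num : (0:ℝ) < 1/2) (by norm_num : (0:ℝ) ≤ 1/2) (by norm_num)
    have heq : (1/2 : ℝ) • (v + (-c) • u) + (1/2 : ℝ) • v = v + (-c / 2) • u := by
      match_scalars <;> ring
    rwa [heq] at hcomb
end

section
/- Let K be a cap body of the unit ball in E^d with vertex set V and let v ∈ V. A unit vector u ∈ S^{d-1} illuminates v (i.e., there exists λ > 0 with v + λu ∈ int K) if and only if the closed spherical cap C_v = {p ∈ S^{d-1} : ⟨p, v⟩ ≥ 1} is contained in the open hemisphere Hem_{-u} = {x ∈ S^{d-1} : ⟨x, -u⟩ > 0}. -/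
/-!
A cap point `p` of the vertex `v` gives a supporting half-space `⟪p, x⟫ ≤ ⟪p, v⟫` of `K` at `v`:
it contains the ball because `⟪p, v⟫ ≥ 1`, and every other vertex `w` because `[v, w]` meets the
ball. So a direction illuminating `v` must point strictly into every such half-space, i.e.
`⟪p, u⟫ < 0`. Conversely, if the cap lies in `Hem_{-u}`, then `⟪v, u⟫ < 0`, and the foot
`q = v - ⟪v, u⟫ u` of `v` on `u^⊥` lies in the open ball: otherwise `q / ‖q‖` would be a cap
point orthogonal to `u`. The open segment from `v` to `q` then lies in `int K`.
-/

open scoped RealInnerProductSpace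

open Metric Set

variable {E : Type*} [NormedAddCommGroup E] [InnerProductSpace ℝ E]

def sphericalCap (v : E) : Set E := {p | ‖p‖ = 1 ∧ 1 ≤ ⟪p, v⟫}

def openHemisphere (w : E) : Set E := {x | ‖x‖ = 1 ∧ 0 < ⟪x, w⟫}

lemma real_inner_le_one_of_norm_le_one {p x : E} (hp : ‖p‖ ≤ 1) (hx : ‖x‖ ≤ 1) :
    ⟪p, x⟫ ≤ 1 :=
  (real_inner_le_norm p x).trans (mul_le_one₀ hp (norm_nonneg x) hx)

lemma real_inner_le_of_mem_segment_of_ne {p v w z : E} (hz : z ∈ segment ℝ v w) (hzv : z ≠ v)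
    (hpz : ⟪p, z⟫ ≤ ⟪p, v⟫) : ⟪p, w⟫ ≤ ⟪p, v⟫ := by
  obtain ⟨a, b, ha, hb, hab, rfl⟩ := hz
  have hb : 0 < b := hb.lt_of_ne fun hb0 => hzv (by simp [← hb0, show a = 1 by linarith])
  obtain rfl : a = 1 - b := by linarith
  rw [inner_add_right, real_inner_smul_right, real_inner_smul_right] at hpz
  exact le_of_mul_le_mul_left (by linarith) hb

lemma convexHull_closedBall_union_subset_setOf_inner_le {V : Set E} {p v : E} (hp : ‖p‖ ≤ 1)
    (hpv : 1 ≤ ⟪p, v⟫) (hv : 1 < ‖v‖)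
    (hVseg : ∀ w ∈ V, v ≠ w → (segment ℝ v w ∩ closedBall (0 : E) 1).Nonempty) :
    convexHull ℝ (closedBall (0 : E) 1 ∪ V) ⊆ {x | ⟪p, x⟫ ≤ ⟪p, v⟫} := by
  refine convexHull_min ?_ (convex_halfSpace_le (innerₛₗ ℝ p).isLinear ⟪p, v⟫)
  rintro x (hx | hx)
  · exact (real_inner_le_one_of_norm_le_one hp (mem_closedBall_zero_iff.1 hx)).trans hpv
  · obtain rfl | hvx := eq_or_ne v x
    · exact le_refl ⟪p, v⟫
    obtain ⟨z, hz, hz1⟩ := hVseg x hx hvx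
    have hz1 := mem_closedBall_zero_iff.1 hz1
    exact real_inner_le_of_mem_segment_of_ne hz (by rintro rfl; linarith)
      ((real_inner_le_one_of_norm_le_one hp hz1).trans hpv)

lemma real_inner_lt_of_mem_interior_setOf_inner_le {p x : E} {c : ℝ} (hp : p ≠ 0)
    (hx : x ∈ interior {y | ⟪p, y⟫ ≤ c}) : ⟪p, x⟫ < c := by
  have hf : innerSL ℝ p ≠ 0 := by
    rw [← norm_ne_zero_iff, innerSL_apply_norm]
    exact norm_ne_zero_iff.2 hp
  simpa [interior_Iic] using ((innerSL ℝ p).isOpenMap_of_ne_zero hf)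
    |>.interior_preimage_subset_preimage_interior (s := Iic c) hx

lemma inv_norm_smul_mem_sphericalCap {q v : E} (hq : 1 ≤ ‖q‖) (hqv : ⟪q, v⟫ = ‖q‖ ^ 2) :
    ‖q‖⁻¹ • q ∈ sphericalCap v := by
  have hq0 : ‖q‖ ≠ 0 := by positivity
  refine ⟨by rw [norm_smul, norm_inv, norm_norm, inv_mul_cancel₀ hq0], ?_⟩
  rw [real_inner_smul_left, hqv, sq, ← mul_assoc, inv_mul_cancel₀ hq0, one_mul]
  exact hq

lemma real_inner_neg_of_sphericalCap_subset {u v : E} (hv : 1 ≤ ‖v‖)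
    (h : sphericalCap v ⊆ openHemisphere (-u)) : ⟪v, u⟫ < 0 := by
  have hpos := (h (inv_norm_smul_mem_sphericalCap hv (real_inner_self_eq_norm_sq v))).2
  rw [inner_neg_right, real_inner_smul_left] at hpos
  have hv0 : 0 < ‖v‖⁻¹ := by positivity
  nlinarith

lemma norm_sub_inner_smul_lt_one_of_sphericalCap_subset {u v : E} (hu : ‖u‖ = 1)
    (h : sphericalCap v ⊆ openHemisphere (-u)) : ‖v - ⟪v, u⟫ • u‖ < 1 := by
  set q := v - ⟪v, u⟫ • u
  have hqu : ⟪q, u⟫ = 0 := by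
    simp [q, inner_sub_left, real_inner_smul_left, hu]
  have hqv : ⟪q, v⟫ = ‖q‖ ^ 2 := by
    have hvq : v = q + ⟪v, u⟫ • u := by simp [q]
    rw [← real_inner_self_eq_norm_sq]
    conv_lhs => rw [hvq]
    rw [inner_add_right, real_inner_smul_right, hqu, mul_zero, add_zero]
  by_contra! hq
  simpa [inner_neg_right, real_inner_smul_left, hqu] using
    (h (inv_norm_smul_mem_sphericalCap hq hqv)).2

lemma add_smul_mem_interior_of_add_smul_mem_ball {K : Set E} (hK : Convex ℝ K)
    (hB : ball (0 : E) 1 ⊆ K) {u v : E} (hv : v ∈ K) {μ : ℝ} (hμ : v + μ • u ∈ ball (0 : E) 1) :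
    v + (μ / 2) • u ∈ interior K := by
  refine hK.openSegment_self_interior_subset_interior hv (interior_maximal hB isOpen_ball hμ) ?_
  exact ⟨1 / 2, 1 / 2, by norm_num, by norm_num, by norm_num, by module⟩

theorem capBody_vertex_illuminated_iff_cap_in_hemisphere_general {d : ℕ}
    (V : Set (EuclideanSpace ℝ (Fin d)))
    (hVout : ∀ v ∈ V, 1 < ‖v‖)
    (hVseg : ∀ v ∈ V, ∀ w ∈ V, v ≠ w →
      (segment ℝ v w ∩ Metric.closedBall (0 : EuclideanSpace ℝ (Fin d)) 1).Nonempty)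
    (K : Set (EuclideanSpace ℝ (Fin d)))
    (hK : K = convexHull ℝ (Metric.closedBall (0 : EuclideanSpace ℝ (Fin d)) 1 ∪ V))
    (v : EuclideanSpace ℝ (Fin d)) (hv : v ∈ V)
    (u : EuclideanSpace ℝ (Fin d)) (hu : ‖u‖ = 1) :
    (∃ l : ℝ, 0 < l ∧ v + l • u ∈ interior K) ↔
      {p : EuclideanSpace ℝ (Fin d) | ‖p‖ = 1 ∧ 1 ≤ ⟪p, v⟫} ⊆
        {x : EuclideanSpace ℝ (Fin d) | ‖x‖ = 1 ∧ 0 < ⟪x, -u⟫} := by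
  subst hK
  change _ ↔ sphericalCap v ⊆ openHemisphere (-u)
  constructor
  · rintro ⟨l, hl, hlu⟩ p ⟨hp, hpv⟩
    have hp0 : p ≠ 0 := by rintro rfl; simp at hp
    have hsupp :=
      convexHull_closedBall_union_subset_setOf_inner_le hp.le hpv (hVout v hv) (hVseg v hv)
    have hlt := real_inner_lt_of_mem_interior_setOf_inner_le hp0 (interior_mono hsupp hlu)
    rw [inner_add_right, real_inner_smul_right] at hlt
    refine ⟨hp, ?_⟩
    rw [inner_neg_right]
    nlinarith
  · intro h
    have hvu := real_inner_neg_of_sphericalCap_subset (hVout v hv).le h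
    refine ⟨-⟪v, u⟫ / 2, by linarith, ?_⟩
    have hq := norm_sub_inner_smul_lt_one_of_sphericalCap_subset hu h
    rw [sub_eq_add_neg, ← neg_smul] at hq
    exact add_smul_mem_interior_of_add_smul_mem_ball (convex_convexHull ℝ _)
      (ball_subset_closedBall.trans (subset_union_left.trans (subset_convexHull ℝ _)))
      (subset_convexHull ℝ _ (Or.inr hv)) (mem_ball_zero_iff.2 hq)

/-- For a cap body `K = conv(B ∪ V)` of the unit ball in `E^d` and a vertex
`v ∈ V`, a unit direction `u` illuminates `v` iff the closed spherical cap
`C_v = {p ∈ S^{d-1} : ⟪p, v⟫ ≥ 1}` is contained in the open hemisphere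
`Hem_{-u} = {x ∈ S^{d-1} : ⟪x, -u⟫ > 0}`. -/
theorem capBody_vertex_illuminated_iff_cap_in_hemisphere {d : ℕ} (hd : 2 ≤ d)
    (V : Set (EuclideanSpace ℝ (Fin d))) (hVfin : V.Finite)
    (hVout : ∀ v ∈ V, 1 < ‖v‖)
    (hVseg : ∀ v ∈ V, ∀ w ∈ V, v ≠ w →
      (segment ℝ v w ∩ Metric.closedBall (0 : EuclideanSpace ℝ (Fin d)) 1).Nonempty)
    (K : Set (EuclideanSpace ℝ (Fin d)))
    (hK : K = convexHull ℝ (Metric.closedBall (0 : EuclideanSpace ℝ (Fin d)) 1 ∪ V))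
    (v : EuclideanSpace ℝ (Fin d)) (hv : v ∈ V)
    (u : EuclideanSpace ℝ (Fin d)) (hu : ‖u‖ = 1) :
    (∃ l : ℝ, 0 < l ∧ v + l • u ∈ interior K) ↔
      {p : EuclideanSpace ℝ (Fin d) | ‖p‖ = 1 ∧ 1 ≤ ⟪p, v⟫} ⊆
        {x : EuclideanSpace ℝ (Fin d) | ‖x‖ = 1 ∧ 0 < ⟪x, -u⟫} :=
  capBody_vertex_illuminated_iff_cap_in_hemisphere_general V hVout hVseg K hK v hv u hu
end

section
/- Let {C(o_i, r_i)}_{i ∈ I} be a countable family of closed spherical caps on S^3 ⊂ E^4 with radii r_i ∈ (0, π/2), whose interiors are pairwise disjoint, and which is unconditionally symmetric: for each i ∈ I and each coordinate index m ∈ {1,2,3,4}, the cap with center σ_m(o_i) (the reflection of o_i negating the m-th coordinate) and radius r_i also belongs to the family. Then there exist four pairwise orthogonal unit vectors w_1, w_2, w_3, w_4 ∈ E^4 such that every cap C(o_i, r_i) is contained in {x ∈ S^3 : ⟨x, w_k⟩ > 0} or in {x ∈ S^3 : ⟨x, w_k⟩ < 0} for some k ∈ {1,2,3,4}. -/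
/-!
Packing plus unconditional symmetry force every coordinate of a centre `o` to be `0` or at least
`sin r` in absolute value: otherwise the cap overlaps its mirror image in that coordinate
hyperplane. A coordinate with `|o m| > sin r` means that the hyperplane `x m = 0` separates the cap,
with some room to spare. The remaining caps touch every coordinate hyperplane: all nonzero
coordinates of their centres equal `± sin r`. Among them, those with exactly two nonzero
coordinates (`r = π / 4`) have pairwise equal or disjoint supports, so the four coordinates split
into two pairs such that every touching cap has both coordinates of one pair nonzero. Rotating the
coordinate frame by a small angle `φ` inside both pairs separates every touching cap. Only finitely
many caps have radius bounded below, and the small caps have a coordinate `≥ 1 / 2`, so `φ` can be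
taken small enough that every other cap stays separated.
-/

open scoped RealInnerProductSpace
open Real Matrix Filter Topology InnerProductGeometry

section Caps

variable {F : Type*} [NormedAddCommGroup F] [InnerProductSpace ℝ F]

theorem inner_le_of_disjoint_caps {u v : F} (hu : ‖u‖ = 1) (hv : ‖v‖ = 1) {c : ℝ}
    (hdisj : Disjoint {x : F | ‖x‖ = 1 ∧ c < ⟪x, u⟫} {x : F | ‖x‖ = 1 ∧ c < ⟪x, v⟫}) :
    ⟪u, v⟫ ≤ 2 * c ^ 2 - 1 := by
  by_contra! h
  set N := ‖u + v‖
  have hN_sq : N ^ 2 = 2 * (1 + ⟪u, v⟫) := by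
    rw [norm_add_sq_real, hu, hv]; ring
  have hN : 0 < N := by nlinarith [norm_nonneg (u + v)]
  have hcN : c * N < 1 + ⟪u, v⟫ :=
    lt_of_pow_lt_pow_left₀ 2 (by nlinarith) (by rw [mul_pow, hN_sq]; nlinarith)
  -- the normalized midpoint of `u` and `v` lies in both open caps
  have hmid : ⟪N⁻¹ • (u + v), u⟫ = (1 + ⟪u, v⟫) / N ∧ ⟪N⁻¹ • (u + v), v⟫ = (1 + ⟪u, v⟫) / N := by
    simp only [real_inner_smul_left, inner_add_left, real_inner_self_eq_norm_sq, hu, hv,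
      real_inner_comm u v]
    constructor <;> ring
  have hx : ‖N⁻¹ • (u + v)‖ = 1 := by rw [norm_smul, norm_inv, norm_norm, inv_mul_cancel₀ hN.ne']
  have hcx : c < (1 + ⟪u, v⟫) / N := by rwa [lt_div_iff₀ hN]
  exact Set.disjoint_left.mp hdisj ⟨hx, hmid.1 ▸ hcx⟩ ⟨hx, hmid.2 ▸ hcx⟩

theorem inner_le_one_sub_two_mul_min_sin_sq {u v : F} (hu : ‖u‖ = 1) (hv : ‖v‖ = 1) {r r' : ℝ}
    (hr : r ∈ Set.Icc 0 (π / 2)) (hr' : r' ∈ Set.Icc 0 (π / 2))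
    (hdisj : Disjoint {x : F | ‖x‖ = 1 ∧ cos r < ⟪x, u⟫} {x : F | ‖x‖ = 1 ∧ cos r' < ⟪x, v⟫}) :
    ⟪u, v⟫ ≤ 1 - 2 * min (sin r) (sin r') ^ 2 := by
  have hmin : min r r' ∈ Set.Icc 0 (π / 2) := ⟨le_min hr.1 hr'.1, min_le_of_left_le hr.2⟩
  have hcos {t} (ht : t ∈ Set.Icc 0 (π / 2)) (hle : min r r' ≤ t) : cos t ≤ cos (min r r') :=
    cos_le_cos_of_nonneg_of_le_pi hmin.1 (by linarith [ht.2, pi_pos]) hle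
  have hsin_mono : MonotoneOn sin (Set.Icc 0 (π / 2)) :=
    strictMonoOn_sin.monotoneOn.mono (Set.Icc_subset_Icc (by linarith [pi_pos]) le_rfl)
  have hsin : min (sin r) (sin r') = sin (min r r') := (hsin_mono.map_min hr hr').symm
  have h : ⟪u, v⟫ ≤ 2 * cos (min r r') ^ 2 - 1 :=
    inner_le_of_disjoint_caps hu hv <| Set.disjoint_left.mpr fun x hxu hxv =>
      Set.disjoint_left.mp hdisj ⟨hxu.1, (hcos hr (min_le_left _ _)).trans_lt hxu.2⟩
        ⟨hxv.1, (hcos hr' (min_le_right _ _)).trans_lt hxv.2⟩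
  rw [hsin]
  linarith [cos_sq' (min r r')]

theorem inner_pos_of_sin_lt_inner {o w x : F} (ho : ‖o‖ = 1) (hw : ‖w‖ = 1) (hx : ‖x‖ = 1)
    {r : ℝ} (hr : r ∈ Set.Icc 0 (π / 2)) (how : sin r < ⟪o, w⟫) (hxo : cos r ≤ ⟪x, o⟫) :
    0 < ⟪x, w⟫ := by
  rw [inner_eq_cos_angle_of_norm_eq_one ho hw, ← cos_pi_div_two_sub] at how
  rw [inner_eq_cos_angle_of_norm_eq_one hx ho] at hxo
  rw [inner_eq_cos_angle_of_norm_eq_one hx hw]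
  have hxo' : angle x o ≤ r := by
    by_contra! h
    exact (cos_lt_cos_of_nonneg_of_le_pi hr.1 (angle_le_pi x o) h).not_ge hxo
  have how' : angle o w < π / 2 - r := by
    by_contra! h
    exact (cos_le_cos_of_nonneg_of_le_pi (by linarith [hr.2]) (angle_le_pi o w) h).not_gt how
  apply cos_pos_of_mem_Ioo
  constructor <;> linarith [angle_nonneg x w, angle_le_angle_add_angle x o w, pi_pos]

theorem cap_subset_or_of_sin_lt_abs_inner {o w : F} (ho : ‖o‖ = 1) (hw : ‖w‖ = 1) {r : ℝ}
    (hr : r ∈ Set.Icc 0 (π / 2)) (h : sin r < |⟪o, w⟫|) :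
    {x : F | ‖x‖ = 1 ∧ cos r ≤ ⟪x, o⟫} ⊆ {x : F | ‖x‖ = 1 ∧ 0 < ⟪x, w⟫} ∨
      {x : F | ‖x‖ = 1 ∧ cos r ≤ ⟪x, o⟫} ⊆ {x : F | ‖x‖ = 1 ∧ ⟪x, w⟫ < 0} := by
  rcases lt_abs.mp h with h | h
  · exact .inl fun x hx => ⟨hx.1, inner_pos_of_sin_lt_inner ho hw hx.1 hr h hx.2⟩
  · refine .inr fun x hx => ⟨hx.1, ?_⟩
    have := inner_pos_of_sin_lt_inner ho ((norm_neg w).trans hw) hx.1 hr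
      (by rwa [inner_neg_right]) hx.2
    rwa [inner_neg_right, neg_pos] at this

end Caps

noncomputable def coordReflection {n : ℕ} (m : Fin n) (x : EuclideanSpace ℝ (Fin n)) :
    EuclideanSpace ℝ (Fin n) :=
  x - (2 * x m) • EuclideanSpace.single m 1

theorem coordReflection_apply {n : ℕ} (m : Fin n) (x : EuclideanSpace ℝ (Fin n)) (k : Fin n) :
    coordReflection m x k = if k = m then -x m else x k := by
  by_cases h : k = m
  · subst h; simp [coordReflection]; ring
  · simp [coordReflection, h]

theorem inner_coordReflection_self {n : ℕ} (m : Fin n) (x : EuclideanSpace ℝ (Fin n)) :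
    ⟪x, coordReflection m x⟫ = ‖x‖ ^ 2 - 2 * x m ^ 2 := by
  rw [coordReflection, inner_sub_right, real_inner_smul_right, EuclideanSpace.inner_single_right,
    real_inner_self_eq_norm_sq]
  simp; ring

noncomputable def coordSupport {n : ℕ} (x : EuclideanSpace ℝ (Fin n)) : Finset (Fin n) :=
  {m | x m ≠ 0}

theorem mem_coordSupport {n : ℕ} {x : EuclideanSpace ℝ (Fin n)} {m : Fin n} :
    m ∈ coordSupport x ↔ x m ≠ 0 := by
  simp [coordSupport]

theorem inner_eq_mul_apply_of_inter_coordSupport_subset {n : ℕ} {x y : EuclideanSpace ℝ (Fin n)}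
    {m : Fin n} (h : coordSupport x ∩ coordSupport y ⊆ {m}) : ⟪x, y⟫ = x m * y m := by
  rw [PiLp.inner_apply, Finset.sum_eq_single m]
  · simp [mul_comm]
  · intro k _ hk
    by_contra hxy
    have hk' : k ∈ coordSupport x ∩ coordSupport y := by
      simp only [Finset.mem_inter, mem_coordSupport]
      constructor <;> intro h0 <;> simp [h0] at hxy
    exact hk (Finset.mem_singleton.mp (h hk'))
  · simp

theorem card_coordSupport_mul_sq {n : ℕ} {x : EuclideanSpace ℝ (Fin n)} (hx : ‖x‖ = 1) {t : ℝ}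
    (ht : ∀ m, x m ≠ 0 → |x m| = t) : (coordSupport x).card * t ^ 2 = 1 := by
  calc (coordSupport x).card * t ^ 2 = ∑ m ∈ coordSupport x, t ^ 2 := by simp
    _ = ∑ m ∈ coordSupport x, x m ^ 2 :=
      Finset.sum_congr rfl fun m hm => by rw [← ht m (mem_coordSupport.mp hm), sq_abs]
    _ = ∑ m, x m ^ 2 := Finset.sum_filter_of_ne fun m _ hm => by simpa using hm
    _ = 1 := by rw [← EuclideanSpace.real_norm_sq_eq, hx, one_pow]

theorem exists_half_le_abs_apply {x : EuclideanSpace ℝ (Fin 4)} (hx : ‖x‖ = 1) :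
    ∃ m, 1 / 2 ≤ |x m| := by
  by_contra! h
  have hsq := EuclideanSpace.real_norm_sq_eq x
  rw [hx, Fin.sum_univ_four] at hsq
  nlinarith [h 0, h 1, h 2, h 3, sq_abs (x 0), sq_abs (x 1), sq_abs (x 2), sq_abs (x 3),
    abs_nonneg (x 0), abs_nonneg (x 1), abs_nonneg (x 2), abs_nonneg (x 3)]

theorem Equiv.Perm.exists_apply_eq_and_apply_eq {α : Type*} [DecidableEq α] {a b x y : α}
    (hab : a ≠ b) (hxy : x ≠ y) : ∃ p : Equiv.Perm α, p a = x ∧ p b = y := by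
  have hy : Equiv.swap a x y ≠ a := by
    rw [Ne, Equiv.swap_apply_eq_iff, Equiv.swap_apply_left]; exact hxy.symm
  refine ⟨Equiv.swap a x * Equiv.swap b (Equiv.swap a x y), ?_, ?_⟩
  · simp [Equiv.swap_apply_of_ne_of_ne hab hy.symm]
  · simp

theorem Finset.mem_or_mem_of_card_lt_card_add_two {α : Type*} [Fintype α] [DecidableEq α]
    {S : Finset α} (hS : Fintype.card α < S.card + 2) {a b : α} (hab : a ≠ b) : a ∈ S ∨ b ∈ S := by
  by_contra! h
  have hsub : S ⊆ ({a, b} : Finset α)ᶜ := by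
    intro m hm; simp only [Finset.mem_compl, Finset.mem_insert, Finset.mem_singleton]
    rintro (rfl | rfl) <;> simp_all
  have h₁ := Finset.card_le_card hsub
  have h₂ := Finset.card_le_univ ({a, b} : Finset α)
  rw [Finset.card_compl, Finset.card_pair hab] at h₁
  rw [Finset.card_pair hab] at h₂
  omega

theorem pair_subset_or_pair_subset_of_three_le_card (p : Equiv.Perm (Fin 4)) {S : Finset (Fin 4)}
    (hS : 3 ≤ S.card) : {p 0, p 1} ⊆ S ∨ {p 2, p 3} ⊆ S := by
  have h (k l : Fin 4) (hkl : k ≠ l) : p k ∈ S ∨ p l ∈ S :=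
    Finset.mem_or_mem_of_card_lt_card_add_two (by simp; omega) (p.injective.ne hkl)
  simp only [Finset.insert_subset_iff, Finset.singleton_subset_iff]
  have := h 0 2 (by decide); have := h 0 3 (by decide); have := h 1 2 (by decide)
  have := h 1 3 (by decide)
  tauto

theorem compl_pair_apply_zero_one (p : Equiv.Perm (Fin 4)) :
    ({p 0, p 1} : Finset (Fin 4))ᶜ = {p 2, p 3} := by
  refine (Finset.eq_of_subset_of_card_le ?_ ?_).symm
  · simp [Finset.insert_subset_iff, p.injective.eq_iff]
  · rw [Finset.card_compl, Finset.card_pair (p.injective.ne (by decide)),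
      Finset.card_pair (p.injective.ne (by decide))]
    simp

theorem exists_perm_pair_subset {𝒮 : Set (Finset (Fin 4))} (hcard : ∀ S ∈ 𝒮, 2 ≤ S.card)
    (hpair : ∀ S ∈ 𝒮, ∀ T ∈ 𝒮, S.card = 2 → T.card = 2 → S = T ∨ Disjoint S T) :
    ∃ p : Equiv.Perm (Fin 4), ∀ S ∈ 𝒮, {p 0, p 1} ⊆ S ∨ {p 2, p 3} ⊆ S := by
  by_cases h₂ : ∃ S₀ ∈ 𝒮, S₀.card = 2
  · obtain ⟨S₀, hS₀, hcard₀⟩ := h₂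
    obtain ⟨x, y, hxy, rfl⟩ := Finset.card_eq_two.mp hcard₀
    obtain ⟨p, rfl, rfl⟩ :=
      Equiv.Perm.exists_apply_eq_and_apply_eq (by decide : (0 : Fin 4) ≠ 1) hxy
    refine ⟨p, fun S hS => ?_⟩
    rcases (hcard S hS).eq_or_lt with h | h
    · rcases hpair _ hS₀ S hS hcard₀ h.symm with rfl | hdisj
      · exact .inl le_rfl
      · have hsub : S ⊆ {p 2, p 3} :=
          compl_pair_apply_zero_one p ▸ Finset.subset_compl_iff_disjoint_right.mpr hdisj.symm
        refine .inr (Finset.eq_of_subset_of_card_le hsub ?_).ge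
        rw [← h, Finset.card_pair (p.injective.ne (by decide))]
    · exact pair_subset_or_pair_subset_of_three_le_card p h
  · push Not at h₂
    exact ⟨1, fun S hS => pair_subset_or_pair_subset_of_three_le_card 1
      ((hcard S hS).lt_of_ne (h₂ S hS).symm)⟩

theorem Set.Finite.of_isCompact_of_le_dist {X ι : Type*} [PseudoMetricSpace X] {K : Set X}
    (hK : IsCompact K) {ε : ℝ} (hε : 0 < ε) {f : ι → X} {S : Set ι} (hf : ∀ i ∈ S, f i ∈ K)
    (hsep : ∀ i ∈ S, ∀ j ∈ S, i ≠ j → ε ≤ dist (f i) (f j)) : S.Finite := by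
  obtain ⟨t, -, ht, hcover⟩ := finite_cover_balls_of_compact hK (half_pos hε)
  refine (ht.biUnion (t := fun y => {i | i ∈ S ∧ f i ∈ Metric.ball y (ε / 2)})
    fun y _ => ?_).subset fun i hi => ?_
  · exact Set.Subsingleton.finite fun i hi j hj => by
        by_contra hij
        have := dist_triangle_right (f i) (f j) y
        linarith [hsep i hi.1 j hj.1 hij, Metric.mem_ball.mp hi.2, Metric.mem_ball.mp hj.2]
  · obtain ⟨y, hy, hiy⟩ := Set.mem_iUnion₂.mp (hcover (hf i hi))
    exact Set.mem_biUnion hy ⟨hi, hiy⟩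

theorem orthonormal_toLp_of_mul_transpose_eq_one {n : Type*} [Fintype n] [DecidableEq n]
    {R : Matrix n n ℝ} (h : R * Rᵀ = 1) : Orthonormal ℝ fun k => WithLp.toLp 2 (R k) := by
  rw [orthonormal_iff_ite]
  intro k l
  rw [← Matrix.one_apply, ← h, Matrix.mul_apply, PiLp.inner_apply]
  simp [mul_comm]

noncomputable def blockRotation (φ : ℝ) : Matrix (Fin 4) (Fin 4) ℝ :=
  !![cos φ, sin φ, 0, 0; -sin φ, cos φ, 0, 0; 0, 0, cos φ, sin φ; 0, 0, -sin φ, cos φ]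

theorem blockRotation_mul_transpose (φ : ℝ) : blockRotation φ * (blockRotation φ)ᵀ = 1 := by
  ext k l
  fin_cases k <;> fin_cases l <;>
    simp [blockRotation, Matrix.mul_apply, Fin.sum_univ_four] <;>
    first | ring1 | linear_combination sin_sq_add_cos_sq φ

-- `e (p k)` rotated by the angle `φ` in the planes `⟨e (p 0), e (p 1)⟩` and `⟨e (p 2), e (p 3)⟩`
noncomputable def rotatedFrame (p : Equiv.Perm (Fin 4)) (φ : ℝ) (k : Fin 4) :
    EuclideanSpace ℝ (Fin 4) :=
  WithLp.toLp 2 ((blockRotation φ).submatrix id p.symm k)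

theorem orthonormal_rotatedFrame (p : Equiv.Perm (Fin 4)) (φ : ℝ) :
    Orthonormal ℝ (rotatedFrame p φ) :=
  orthonormal_toLp_of_mul_transpose_eq_one <| by
    rw [Matrix.transpose_submatrix, Matrix.submatrix_mul_transpose_submatrix,
      blockRotation_mul_transpose]

theorem inner_rotatedFrame (p : Equiv.Perm (Fin 4)) (φ : ℝ) (x : EuclideanSpace ℝ (Fin 4))
    (k : Fin 4) : ⟪x, rotatedFrame p φ k⟫ = ∑ n, blockRotation φ k n * x (p n) := by
  rw [PiLp.inner_apply, ← Equiv.sum_comp p]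
  simp [rotatedFrame]

theorem inner_single_rotatedFrame (p : Equiv.Perm (Fin 4)) (φ : ℝ) (k : Fin 4) :
    ⟪EuclideanSpace.single (p k) (1 : ℝ), rotatedFrame p φ k⟫ = cos φ := by
  rw [inner_rotatedFrame]
  fin_cases k <;> simp [blockRotation, PiLp.single_apply, p.injective.eq_iff]

theorem abs_inner_rotatedFrame_sub_apply_le (p : Equiv.Perm (Fin 4)) {φ : ℝ} (hφ : 0 ≤ φ)
    (x : EuclideanSpace ℝ (Fin 4)) (k : Fin 4) :
    |⟪x, rotatedFrame p φ k⟫ - x (p k)| ≤ φ * ‖x‖ := by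
  set e := EuclideanSpace.single (p k) (1 : ℝ)
  have hdist : ‖rotatedFrame p φ k - e‖ ≤ φ := by
    refine (pow_le_pow_iff_left₀ (norm_nonneg _) hφ two_ne_zero).mp ?_
    rw [norm_sub_sq_real, (orthonormal_rotatedFrame p φ).1 k, real_inner_comm,
      inner_single_rotatedFrame, PiLp.norm_single, norm_one]
    linarith [one_sub_sq_div_two_le_cos (x := φ)]
  have hx : x (p k) = ⟪x, e⟫ := by simp [e, EuclideanSpace.inner_single_right]
  rw [hx, ← inner_sub_right]
  calc |⟪x, rotatedFrame p φ k - e⟫| ≤ ‖x‖ * ‖rotatedFrame p φ k - e‖ := abs_real_inner_le_norm _ _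
    _ ≤ φ * ‖x‖ := by rw [mul_comm]; gcongr

theorem lt_abs_rotate_or_lt_abs_rotate {a b φ : ℝ} (ha : a ≠ 0) (hab : |a| = |b|)
    (hφ : φ ∈ Set.Ioo 0 (π / 2)) :
    |a| < |cos φ * a + sin φ * b| ∨ |a| < |-sin φ * a + cos φ * b| := by
  simp only [← sq_lt_sq]
  have hab2 : a ^ 2 = b ^ 2 := (sq_eq_sq_iff_abs_eq_abs a b).mpr hab
  have hb : b ≠ 0 := by rintro rfl; simp_all
  have hsum : (cos φ * a + sin φ * b) ^ 2 + (-sin φ * a + cos φ * b) ^ 2 = 2 * a ^ 2 := by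
    linear_combination (a ^ 2 + b ^ 2) * cos_sq_add_sin_sq φ - hab2
  have hdiff : (cos φ * a + sin φ * b) ^ 2 - (-sin φ * a + cos φ * b) ^ 2 =
      2 * sin (2 * φ) * (a * b) := by
    rw [sin_two_mul]; linear_combination (cos φ ^ 2 - sin φ ^ 2) * hab2
  have hsin : 0 < sin (2 * φ) := sin_pos_of_pos_of_lt_pi (by linarith [hφ.1]) (by linarith [hφ.2])
  have hne : 2 * sin (2 * φ) * (a * b) ≠ 0 := by positivity
  by_contra! h
  exact hne (by rw [← hdiff]; linarith [h.1, h.2])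

theorem inner_rotatedFrame_eq (p : Equiv.Perm (Fin 4)) (φ : ℝ) (x : EuclideanSpace ℝ (Fin 4)) :
    ⟪x, rotatedFrame p φ 0⟫ = cos φ * x (p 0) + sin φ * x (p 1) ∧
    ⟪x, rotatedFrame p φ 1⟫ = -sin φ * x (p 0) + cos φ * x (p 1) ∧
    ⟪x, rotatedFrame p φ 2⟫ = cos φ * x (p 2) + sin φ * x (p 3) ∧
    ⟪x, rotatedFrame p φ 3⟫ = -sin φ * x (p 2) + cos φ * x (p 3) := by
  simp only [inner_rotatedFrame, Fin.sum_univ_four]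
  simp [blockRotation]

theorem exists_lt_abs_inner_rotatedFrame_of_pair_subset (p : Equiv.Perm (Fin 4)) {φ : ℝ}
    (hφ : φ ∈ Set.Ioo 0 (π / 2)) {x : EuclideanSpace ℝ (Fin 4)} {t : ℝ}
    (ht : ∀ m, x m ≠ 0 → |x m| = t)
    (hpair : {p 0, p 1} ⊆ coordSupport x ∨ {p 2, p 3} ⊆ coordSupport x) :
    ∃ k, t < |⟪x, rotatedFrame p φ k⟫| := by
  obtain ⟨h0, h1, h2, h3⟩ := inner_rotatedFrame_eq p φ x
  rcases hpair with hpair | hpair <;>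
    simp only [Finset.insert_subset_iff, Finset.singleton_subset_iff, mem_coordSupport] at hpair
  · rcases lt_abs_rotate_or_lt_abs_rotate hpair.1 ((ht _ hpair.1).trans (ht _ hpair.2).symm) hφ
      with h | h
    · exact ⟨0, by rwa [h0, ← ht _ hpair.1]⟩
    · exact ⟨1, by rwa [h1, ← ht _ hpair.1]⟩
  · rcases lt_abs_rotate_or_lt_abs_rotate hpair.1 ((ht _ hpair.1).trans (ht _ hpair.2).symm) hφ
      with h | h
    · exact ⟨2, by rwa [h2, ← ht _ hpair.1]⟩
    · exact ⟨3, by rwa [h3, ← ht _ hpair.1]⟩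

theorem exists_lt_abs_inner_rotatedFrame_of_add_lt_abs (p : Equiv.Perm (Fin 4)) {φ : ℝ}
    (hφ : 0 ≤ φ) {x : EuclideanSpace ℝ (Fin 4)} (hx : ‖x‖ = 1) {t : ℝ} {m : Fin 4}
    (hm : t + φ < |x m|) : ∃ k, t < |⟪x, rotatedFrame p φ k⟫| := by
  refine ⟨p.symm m, ?_⟩
  have h := abs_inner_rotatedFrame_sub_apply_le p hφ x (p.symm m)
  rw [p.apply_symm_apply, hx, mul_one, abs_sub_comm] at h
  linarith [abs_sub_abs_le_abs_sub (x m) ⟪x, rotatedFrame p φ (p.symm m)⟫]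

section UnconditionalPacking

variable {I : Type*} {o : I → EuclideanSpace ℝ (Fin 4)} {s : I → ℝ}

theorem le_abs_apply_of_ne_zero (ho : ∀ i, ‖o i‖ = 1)
    (hpack : ∀ i j, i ≠ j → ⟪o i, o j⟫ ≤ 1 - 2 * min (s i) (s j) ^ 2)
    (hsym : ∀ i m, ∃ j, o j = coordReflection m (o i) ∧ s j = s i)
    {i : I} {m : Fin 4} (hm : o i m ≠ 0) : s i ≤ |o i m| := by
  obtain ⟨j, hj, hsj⟩ := hsym i m
  have hij : i ≠ j := by
    rintro rfl
    have := congrArg (· m) hj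
    rw [coordReflection_apply, if_pos rfl] at this
    exact hm (by linarith)
  have h := hpack i j hij
  rw [hj, inner_coordReflection_self, ho, hsj, min_self] at h
  exact (le_abs_self _).trans (sq_le_sq.mp (by linarith))

theorem abs_apply_eq_of_forall_abs_apply_le (ho : ∀ i, ‖o i‖ = 1)
    (hpack : ∀ i j, i ≠ j → ⟪o i, o j⟫ ≤ 1 - 2 * min (s i) (s j) ^ 2)
    (hsym : ∀ i m, ∃ j, o j = coordReflection m (o i) ∧ s j = s i)
    {i : I} (htouch : ∀ m, |o i m| ≤ s i) (m : Fin 4) (hm : o i m ≠ 0) : |o i m| = s i :=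
  (htouch m).antisymm (le_abs_apply_of_ne_zero ho hpack hsym hm)

theorem exists_abs_apply_eq_and_mul_apply_nonneg
    (hsym : ∀ i m, ∃ j, o j = coordReflection m (o i) ∧ s j = s i) (j : I) (m : Fin 4) (a : ℝ) :
    ∃ j', s j' = s j ∧ (∀ k, |o j' k| = |o j k|) ∧ 0 ≤ a * o j' m := by
  by_cases h : 0 ≤ a * o j m
  · exact ⟨j, rfl, fun _ => rfl, h⟩
  · obtain ⟨j', hj', hsj'⟩ := hsym j m
    refine ⟨j', hsj', fun k => ?_, ?_⟩
    · rw [hj', coordReflection_apply]; split_ifs with hk <;> simp [hk]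
    · rw [hj', coordReflection_apply, if_pos rfl]; linarith

theorem coordSupport_eq_or_disjoint (ho : ∀ i, ‖o i‖ = 1)
    (hpack : ∀ i j, i ≠ j → ⟪o i, o j⟫ ≤ 1 - 2 * min (s i) (s j) ^ 2)
    (hsym : ∀ i m, ∃ j, o j = coordReflection m (o i) ∧ s j = s i) {i j : I}
    (hi : ∀ m, o i m ≠ 0 → |o i m| = s i) (hj : ∀ m, o j m ≠ 0 → |o j m| = s j)
    (hi₂ : (coordSupport (o i)).card = 2) (hj₂ : (coordSupport (o j)).card = 2) :
    coordSupport (o i) = coordSupport (o j) ∨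
      Disjoint (coordSupport (o i)) (coordSupport (o j)) := by
  by_contra! ⟨hne, hmeet⟩
  obtain ⟨m, hmi, hmj⟩ := Finset.not_disjoint_iff.mp hmeet
  -- reflecting `o j` in the shared coordinate, if necessary, makes `⟪o i, o j'⟫` positive
  obtain ⟨j', hsj', habs, hpos⟩ := exists_abs_apply_eq_and_mul_apply_nonneg hsym j m (o i m)
  have hsupp : coordSupport (o j') = coordSupport (o j) := by
    ext k; rw [mem_coordSupport, mem_coordSupport, ← abs_ne_zero, habs, abs_ne_zero]
  have hij' : i ≠ j' := by rintro rfl; exact hne hsupp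
  have hinter : coordSupport (o i) ∩ coordSupport (o j') ⊆ {m} := by
    intro k hk
    by_contra hkm
    rw [Finset.mem_inter] at hk
    have hpair (S : Finset (Fin 4)) (hS : S.card = 2) (hmS : m ∈ S) (hkS : k ∈ S) : S = {m, k} :=
      (Finset.eq_of_subset_of_card_le (by simp [Finset.insert_subset_iff, hmS, hkS])
        (by rw [hS, Finset.card_pair (Ne.symm (Finset.notMem_singleton.mp hkm))])).symm
    exact hne ((hpair _ hi₂ hmi hk.1).trans ((hpair _ hj₂ hmj (hsupp ▸ hk.2)).symm))
  have hsi := card_coordSupport_mul_sq (ho i) hi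
  have hsj := card_coordSupport_mul_sq (ho j) hj
  rw [hi₂] at hsi; rw [hj₂] at hsj
  push_cast at hsi hsj
  have hs_eq : s i = s j :=
    (sq_eq_sq₀ (hi m (mem_coordSupport.mp hmi) ▸ abs_nonneg _)
      (hj m (mem_coordSupport.mp hmj) ▸ abs_nonneg _)).mp (by linarith)
  have h := hpack i j' hij'
  rw [inner_eq_mul_apply_of_inter_coordSupport_subset hinter, hsj', ← hs_eq, min_self] at h
  have : o i m * o j' m = s i ^ 2 := by
    rw [← abs_of_nonneg hpos, abs_mul, habs, hi m (mem_coordSupport.mp hmi),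
      hj m (mem_coordSupport.mp hmj), hs_eq, sq]
  linarith

theorem exists_perm_pair_subset_coordSupport (ho : ∀ i, ‖o i‖ = 1) (hs : ∀ i, s i < 1)
    (hpack : ∀ i j, i ≠ j → ⟪o i, o j⟫ ≤ 1 - 2 * min (s i) (s j) ^ 2)
    (hsym : ∀ i m, ∃ j, o j = coordReflection m (o i) ∧ s j = s i) :
    ∃ p : Equiv.Perm (Fin 4), ∀ i, (∀ m, |o i m| ≤ s i) →
      {p 0, p 1} ⊆ coordSupport (o i) ∨ {p 2, p 3} ⊆ coordSupport (o i) := by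
  have htight {i} (htouch : ∀ m, |o i m| ≤ s i) :=
    abs_apply_eq_of_forall_abs_apply_le ho hpack hsym htouch
  have hcard {i} (htouch : ∀ m, |o i m| ≤ s i) : 2 ≤ (coordSupport (o i)).card := by
    have hcard := card_coordSupport_mul_sq (ho i) (htight htouch)
    have hs0 : 0 ≤ s i := (abs_nonneg _).trans (htouch 0)
    by_contra! h
    have : ((coordSupport (o i)).card : ℝ) ≤ 1 := by exact_mod_cast Nat.le_of_lt_succ h
    nlinarith [hs i]
  obtain ⟨p, hp⟩ := exists_perm_pair_subset
    (𝒮 := {S | ∃ i, (∀ m, |o i m| ≤ s i) ∧ coordSupport (o i) = S})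
    (by rintro _ ⟨i, hi, rfl⟩; exact hcard hi)
    (by rintro _ ⟨i, hi, rfl⟩ _ ⟨j, hj, rfl⟩ hi₂ hj₂
        exact coordSupport_eq_or_disjoint ho hpack hsym (htight hi) (htight hj) hi₂ hj₂)
  exact ⟨p, fun i hi => hp _ ⟨i, hi, rfl⟩⟩

theorem finite_setOf_lt (ho : ∀ i, ‖o i‖ = 1)
    (hpack : ∀ i j, i ≠ j → ⟪o i, o j⟫ ≤ 1 - 2 * min (s i) (s j) ^ 2) {θ : ℝ} (hθ : 0 < θ) :
    {i | θ < s i}.Finite := by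
  refine Set.Finite.of_isCompact_of_le_dist (isCompact_sphere 0 1) (by positivity : 0 < 2 * θ)
    (fun i _ => mem_sphere_zero_iff_norm.mpr (ho i)) fun i hi j hj hij => ?_
  have hmin : θ < min (s i) (s j) := lt_min hi hj
  have hdist : dist (o i) (o j) ^ 2 = 2 - 2 * ⟪o i, o j⟫ := by
    rw [dist_eq_norm, norm_sub_sq_real, ho i, ho j]; ring
  refine (pow_le_pow_iff_left₀ (by positivity) dist_nonneg two_ne_zero).mp ?_
  nlinarith [hpack i j hij]

theorem eventually_forall_exists_add_lt_abs_apply (ho : ∀ i, ‖o i‖ = 1)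
    (hpack : ∀ i j, i ≠ j → ⟪o i, o j⟫ ≤ 1 - 2 * min (s i) (s j) ^ 2) :
    ∀ᶠ φ in 𝓝 0, ∀ i, (∃ m, s i < |o i m|) → ∃ m, s i + φ < |o i m| := by
  -- finitely many `i` have `1/4 < s i`; all others have a coordinate `|o i m| ≥ 1/2 > s i + φ`
  have hlarge : ∀ᶠ φ in 𝓝 0, ∀ i ∈ {i | 1 / 4 < s i},
      (∃ m, s i < |o i m|) → ∃ m, s i + φ < |o i m| := by
    refine (finite_setOf_lt ho hpack (by norm_num)).eventually_all.mpr fun i _ => ?_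
    by_cases h : ∃ m, s i < |o i m|
    · obtain ⟨m, hm⟩ := h
      filter_upwards [eventually_lt_nhds (sub_pos.mpr hm)] with φ hφ _ using ⟨m, by linarith⟩
    · exact .of_forall fun _ h' => absurd h' h
  filter_upwards [hlarge, eventually_lt_nhds (by norm_num : (0 : ℝ) < 1 / 4)] with φ hlarge hφ i hi
  rcases le_or_gt (s i) (1 / 4) with hsmall | hbig
  · obtain ⟨m, hm⟩ := exists_half_le_abs_apply (ho i)
    exact ⟨m, by linarith⟩
  · exact hlarge i hbig hi

theorem exists_rotatedFrame_forall_exists_lt_abs_inner (ho : ∀ i, ‖o i‖ = 1) (hs : ∀ i, s i < 1)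
    (hpack : ∀ i j, i ≠ j → ⟪o i, o j⟫ ≤ 1 - 2 * min (s i) (s j) ^ 2)
    (hsym : ∀ i m, ∃ j, o j = coordReflection m (o i) ∧ s j = s i) :
    ∃ p φ, ∀ i, ∃ k, s i < |⟪o i, rotatedFrame p φ k⟫| := by
  obtain ⟨p, hp⟩ := exists_perm_pair_subset_coordSupport ho hs hpack hsym
  obtain ⟨φ, hmargin, hφ⟩ := ((eventually_forall_exists_add_lt_abs_apply ho hpack).filter_mono
    nhdsWithin_le_nhds |>.and (Ioo_mem_nhdsGT (half_pos pi_pos))).exists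
  refine ⟨p, φ, fun i => ?_⟩
  by_cases htouch : ∀ m, |o i m| ≤ s i
  · exact exists_lt_abs_inner_rotatedFrame_of_pair_subset p hφ
      (abs_apply_eq_of_forall_abs_apply_le ho hpack hsym htouch) (hp i htouch)
  · push Not at htouch
    obtain ⟨m, hm⟩ := hmargin i htouch
    exact exists_lt_abs_inner_rotatedFrame_of_add_lt_abs p hφ.1.le (ho i) hm

end UnconditionalPacking

theorem unconditionallySymmetric_capPacking_separated_by_four_greatspheres_general
    (I : Type)
    (o : I → EuclideanSpace ℝ (Fin 4)) (r : I → ℝ)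
    (ho : ∀ i, ‖o i‖ = 1) (hr : ∀ i, r i ∈ Set.Ioo 0 (Real.pi / 2))
    (hpack : ∀ i j, i ≠ j → Disjoint
      {x : EuclideanSpace ℝ (Fin 4) | ‖x‖ = 1 ∧ Real.cos (r i) < ⟪x, o i⟫}
      {x : EuclideanSpace ℝ (Fin 4) | ‖x‖ = 1 ∧ Real.cos (r j) < ⟪x, o j⟫})
    (hsym : ∀ i, ∀ m : Fin 4, ∃ j,
      o j = o i - (2 * o i m) • EuclideanSpace.single m (1 : ℝ) ∧ r j = r i) :
    ∃ w : Fin 4 → EuclideanSpace ℝ (Fin 4),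
      (∀ k, ‖w k‖ = 1) ∧ (∀ k l, k ≠ l → ⟪w k, w l⟫ = 0) ∧
      ∀ i, ∃ k : Fin 4,
        ({x : EuclideanSpace ℝ (Fin 4) | ‖x‖ = 1 ∧ Real.cos (r i) ≤ ⟪x, o i⟫} ⊆
            {x : EuclideanSpace ℝ (Fin 4) | ‖x‖ = 1 ∧ 0 < ⟪x, w k⟫}) ∨
        ({x : EuclideanSpace ℝ (Fin 4) | ‖x‖ = 1 ∧ Real.cos (r i) ≤ ⟪x, o i⟫} ⊆
            {x : EuclideanSpace ℝ (Fin 4) | ‖x‖ = 1 ∧ ⟪x, w k⟫ < 0}) := by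
  have hr' i : r i ∈ Set.Icc 0 (π / 2) := Set.Ioo_subset_Icc_self (hr i)
  obtain ⟨p, φ, hsep⟩ := exists_rotatedFrame_forall_exists_lt_abs_inner (s := fun i => sin (r i)) ho
    (fun i => sin_pi_div_two ▸
      sin_lt_sin_of_lt_of_le_pi_div_two (by linarith [(hr i).1, pi_pos]) le_rfl (hr i).2)
    (fun i j hij =>
      inner_le_one_sub_two_mul_min_sin_sq (ho i) (ho j) (hr' i) (hr' j) (hpack i j hij))
    (fun i m => (hsym i m).imp fun j hj => ⟨hj.1, congrArg sin hj.2⟩)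
  have hw := orthonormal_rotatedFrame p φ
  refine ⟨rotatedFrame p φ, hw.1, fun k l hkl => hw.2 hkl, fun i => ?_⟩
  obtain ⟨k, hk⟩ := hsep i
  exact ⟨k, cap_subset_or_of_sin_lt_abs_inner (ho i) (hw.1 k) (hr' i) hk⟩

/-- A countable unconditionally symmetric packing of closed spherical caps
`C(o_i, r_i)` (radii in `(0, π/2)`) on `S³ ⊂ E⁴` can be separated by four pairwise orthogonal
greatspheres: there are pairwise orthogonal unit vectors `w_1, …, w_4` such that every cap lies
in an open hemisphere `{⟪·, w_k⟫ > 0}` or `{⟪·, w_k⟫ < 0}`. Unconditional symmetry: for each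
cap and each coordinate reflection `σ_m`, the reflected cap also belongs to the family. -/
theorem unconditionallySymmetric_capPacking_separated_by_four_greatspheres
    (I : Type) [Countable I]
    (o : I → EuclideanSpace ℝ (Fin 4)) (r : I → ℝ)
    (ho : ∀ i, ‖o i‖ = 1) (hr : ∀ i, r i ∈ Set.Ioo 0 (Real.pi / 2))
    (hpack : ∀ i j, i ≠ j → Disjoint
      {x : EuclideanSpace ℝ (Fin 4) | ‖x‖ = 1 ∧ Real.cos (r i) < ⟪x, o i⟫}
      {x : EuclideanSpace ℝ (Fin 4) | ‖x‖ = 1 ∧ Real.cos (r j) < ⟪x, o j⟫})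
    (hsym : ∀ i, ∀ m : Fin 4, ∃ j,
      o j = o i - (2 * o i m) • EuclideanSpace.single m (1 : ℝ) ∧ r j = r i) :
    ∃ w : Fin 4 → EuclideanSpace ℝ (Fin 4),
      (∀ k, ‖w k‖ = 1) ∧ (∀ k l, k ≠ l → ⟪w k, w l⟫ = 0) ∧
      ∀ i, ∃ k : Fin 4,
        ({x : EuclideanSpace ℝ (Fin 4) | ‖x‖ = 1 ∧ Real.cos (r i) ≤ ⟪x, o i⟫} ⊆
            {x : EuclideanSpace ℝ (Fin 4) | ‖x‖ = 1 ∧ 0 < ⟪x, w k⟫}) ∨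
        ({x : EuclideanSpace ℝ (Fin 4) | ‖x‖ = 1 ∧ Real.cos (r i) ≤ ⟪x, o i⟫} ⊆
            {x : EuclideanSpace ℝ (Fin 4) | ‖x‖ = 1 ∧ ⟪x, w k⟫ < 0}) :=
  unconditionallySymmetric_capPacking_separated_by_four_greatspheres_general I o r ho hr hpack hsym
end

section
/- Let d ≥ 2 and let k_1, k_2 ∈ {2, …, d}. Let c_1 ∈ S^{d-1} ⊂ E^d be a unit vector having exactly k_1 nonzero coordinates, each equal to 1/√k_1, and let c_2 ∈ S^{d-1} be a unit vector having exactly k_2 nonzero coordinates, each equal to 1/√k_2. If the closed spherical caps C(c_1, arcsin(1/√k_1)) and C(c_2, arcsin(1/√k_2)) have disjoint interiors, then k_1 + k_2 - d ≤ √((k_1 - 1)(k_2 - 1)) - 1. -/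
open scoped RealInnerProductSpace
open Finset Real

/-!
Let `m = #(S₁ ∩ S₂)` and `v = 𝟙_{S₁} + 𝟙_{S₂}`, so that `‖v‖² = k₁ + k₂ + 2m` and
`⟪v, 𝟙_{S₁}⟫ = k₁ + m`. The unit vector `v / ‖v‖` lies in the open cap around `c₁` exactly when
`(k₁ - 1)(k₁ + k₂ + 2m) < (k₁ + m)²`, i.e. when `(k₁ - 1)(k₂ - 1) < (m + 1)²`; this condition is
symmetric, so it also lies in the open cap around `c₂`. Disjointness therefore forces
`m + 1 ≤ √((k₁ - 1)(k₂ - 1))`, while inclusion–exclusion in `Fin d` gives `k₁ + k₂ - d ≤ m`.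
-/

def sphericalCapInterior {E : Type*} [NormedAddCommGroup E] [InnerProductSpace ℝ E]
    (c : E) (r : ℝ) : Set E :=
  {x | ‖x‖ = 1 ∧ cos r < ⟪x, c⟫}

theorem cos_arcsin_inv_sqrt_lt_inner_of_sq_lt {E : Type*} [NormedAddCommGroup E]
    [InnerProductSpace ℝ E] {k : ℝ} (hk : 0 < k) {v w : E} (hv : v ≠ 0)
    (hpos : 0 < ⟪v, w⟫) (h : (k - 1) * ‖v‖ ^ 2 < ⟪v, w⟫ ^ 2) :
    cos (arcsin (√k)⁻¹) < ⟪‖v‖⁻¹ • v, (√k)⁻¹ • w⟫ := by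
  have hv' : 0 < ‖v‖ := norm_pos_iff.mpr hv
  rw [cos_arcsin, real_inner_smul_left, real_inner_smul_right, inv_pow, sq_sqrt hk.le,
    Real.sqrt_lt' (mul_pos (inv_pos.mpr hv') (mul_pos (by positivity) hpos)), mul_pow, mul_pow, inv_pow, inv_pow, sq_sqrt hk.le]
  field_simp
  linarith

section

variable {ι : Type*} [DecidableEq ι]

def indicatorVec (S : Finset ι) : EuclideanSpace ℝ ι :=
  WithLp.toLp 2 fun i => if i ∈ S then 1 else 0

theorem inner_indicatorVec [Fintype ι] (S T : Finset ι) :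
    ⟪indicatorVec S, indicatorVec T⟫ = #(S ∩ T) := by
  simp [indicatorVec, PiLp.inner_apply, ← ite_and, filter_and]

theorem eq_smul_indicatorVec {S : Finset ι} {c : EuclideanSpace ℝ ι} {a : ℝ}
    (hc : ∀ i, c i = if i ∈ S then a else 0) : c = a • indicatorVec S := by
  ext i
  simp [hc, indicatorVec]

theorem card_add_card_le_card_add_card_inter [Fintype ι] (S T : Finset ι) :
    #S + #T ≤ Fintype.card ι + #(S ∩ T) := by
  rw [← card_union_add_card_inter]
  exact Nat.add_le_add_right (card_le_univ _) _

theorem normalize_indicatorVec_add_mem_sphericalCapInterior [Fintype ι] {S T : Finset ι}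
    (hS : S.Nonempty)
    (h : ((#S : ℝ) - 1) * (#T - 1) < (#(S ∩ T) + 1) ^ 2) :
    ‖indicatorVec S + indicatorVec T‖⁻¹ • (indicatorVec S + indicatorVec T) ∈
      sphericalCapInterior ((√(#S : ℝ))⁻¹ • indicatorVec S) (arcsin (√(#S : ℝ))⁻¹) := by
  set v := indicatorVec S + indicatorVec T
  have hvS : ⟪v, indicatorVec S⟫ = #S + #(S ∩ T) := by
    rw [inner_add_left, inner_indicatorVec, inner_indicatorVec, inter_self, inter_comm]
  have hvv : ‖v‖ ^ 2 = #S + #T + 2 * #(S ∩ T) := by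
    rw [← real_inner_self_eq_norm_sq]
    simp only [v, inner_add_left, inner_add_right, inner_indicatorVec, inter_self, inter_comm T S]
    ring
  have hSpos : (0 : ℝ) < #S := by exact_mod_cast hS.card_pos
  have hpos : 0 < ⟪v, indicatorVec S⟫ := by rw [hvS]; positivity
  have hv : v ≠ 0 := by rintro hv; simp [hv] at hpos
  refine ⟨norm_smul_inv_norm hv, cos_arcsin_inv_sqrt_lt_inner_of_sq_lt hSpos hv hpos ?_⟩
  rw [hvS, hvv]
  -- `(#S + m)² - (#S - 1)(#S + #T + 2m) = (m + 1)² - (#S - 1)(#T - 1)`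
  linear_combination h

end

theorem kTangent_caps_packing_ineq_general {d : ℕ} (k₁ k₂ : ℕ)
    (hk₁ : 2 ≤ k₁ ∧ k₁ ≤ d) (hk₂ : 2 ≤ k₂ ∧ k₂ ≤ d)
    (c₁ c₂ : EuclideanSpace ℝ (Fin d))
    (S₁ S₂ : Finset (Fin d)) (hS₁ : S₁.card = k₁) (hS₂ : S₂.card = k₂)
    (hc₁ : ∀ i, c₁ i = if i ∈ S₁ then (Real.sqrt k₁)⁻¹ else 0)
    (hc₂ : ∀ i, c₂ i = if i ∈ S₂ then (Real.sqrt k₂)⁻¹ else 0)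
    (hdisj : Disjoint
      {x : EuclideanSpace ℝ (Fin d) |
        ‖x‖ = 1 ∧ Real.cos (Real.arcsin (Real.sqrt k₁)⁻¹) < ⟪x, c₁⟫}
      {x : EuclideanSpace ℝ (Fin d) |
        ‖x‖ = 1 ∧ Real.cos (Real.arcsin (Real.sqrt k₂)⁻¹) < ⟪x, c₂⟫}) :
    (k₁ : ℝ) + k₂ - d ≤ Real.sqrt (((k₁ : ℝ) - 1) * ((k₂ : ℝ) - 1)) - 1 := by
  subst hS₁ hS₂
  obtain rfl := eq_smul_indicatorVec hc₁
  obtain rfl := eq_smul_indicatorVec hc₂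
  have hS₁ : S₁.Nonempty := card_pos.mp (by omega)
  have hS₂ : S₂.Nonempty := card_pos.mp (by omega)
  have hcard : (#S₁ : ℝ) + #S₂ ≤ d + #(S₁ ∩ S₂) := by
    exact_mod_cast Fintype.card_fin d ▸ card_add_card_le_card_add_card_inter S₁ S₂
  have hinter : ((#(S₁ ∩ S₂) : ℝ) + 1) ^ 2 ≤ (#S₁ - 1) * (#S₂ - 1) := by
    by_contra! h
    refine Set.disjoint_left.mp hdisj
      (normalize_indicatorVec_add_mem_sphericalCapInterior hS₁ h) ?_
    rw [add_comm]
    refine normalize_indicatorVec_add_mem_sphericalCapInterior hS₂ ?_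
    rwa [inter_comm, mul_comm]
  linarith [Real.le_sqrt_of_sq_le hinter]

/-- If a `k₁`-tangent cap (center with exactly `k₁` coordinates equal to
`1/√k₁`, rest zero; spherical radius `arcsin(1/√k₁)`) and a `k₂`-tangent cap on
`S^{d-1} ⊂ E^d` have disjoint interiors, then `k₁ + k₂ - d ≤ √((k₁-1)(k₂-1)) - 1`. -/
theorem kTangent_caps_packing_ineq {d : ℕ} (hd : 2 ≤ d) (k₁ k₂ : ℕ)
    (hk₁ : 2 ≤ k₁ ∧ k₁ ≤ d) (hk₂ : 2 ≤ k₂ ∧ k₂ ≤ d)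
    (c₁ c₂ : EuclideanSpace ℝ (Fin d))
    (S₁ S₂ : Finset (Fin d)) (hS₁ : S₁.card = k₁) (hS₂ : S₂.card = k₂)
    (hc₁ : ∀ i, c₁ i = if i ∈ S₁ then (Real.sqrt k₁)⁻¹ else 0)
    (hc₂ : ∀ i, c₂ i = if i ∈ S₂ then (Real.sqrt k₂)⁻¹ else 0)
    (hdisj : Disjoint
      {x : EuclideanSpace ℝ (Fin d) |
        ‖x‖ = 1 ∧ Real.cos (Real.arcsin (Real.sqrt k₁)⁻¹) < ⟪x, c₁⟫}
      {x : EuclideanSpace ℝ (Fin d) |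
        ‖x‖ = 1 ∧ Real.cos (Real.arcsin (Real.sqrt k₂)⁻¹) < ⟪x, c₂⟫}) :
    (k₁ : ℝ) + k₂ - d ≤ Real.sqrt (((k₁ : ℝ) - 1) * ((k₂ : ℝ) - 1)) - 1 :=
  kTangent_caps_packing_ineq_general k₁ k₂ hk₁ hk₂ c₁ c₂ S₁ S₂ hS₁ hS₂ hc₁ hc₂ hdisj
end

section
/- Let C = C(o, r) be a closed spherical cap on S^{d-1} ⊂ E^d (o a unit vector, r ∈ (0, π/2)), let m be a coordinate index, and let σ_m denote the reflection of E^d negating the m-th coordinate. If the m-th coordinate of o is nonzero and the interior of C meets the coordinate greatsphere G_m = {x ∈ S^{d-1} : x_m = 0}, then the interiors of C and of the reflected cap σ_m(C) = C(σ_m(o), r) intersect. Consequently, in a packing of caps that is invariant under σ_m, every cap whose interior meets G_m has its center on G_m. -/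
open scoped RealInnerProductSpace

/-!
Points of `G_m` are fixed by `σ_m`, so their inner products with `o` and with `σ_m o` agree:
a point of `int C ∩ G_m` lies in `int σ_m(C)` as well. In a `σ_m`-invariant packing the cap
`σ_m(C)` is again a member, and since it overlaps `C` it must be `C` itself, i.e. `σ_m o = o`.
-/

/-- The relative interior of the spherical cap `C(o, r)`. -/
def openCap {ι : Type*} [Fintype ι] (o : EuclideanSpace ℝ ι) (r : ℝ) :
    Set (EuclideanSpace ℝ ι) :=
  {x | ‖x‖ = 1 ∧ Real.cos r < ⟪x, o⟫}

section Reflection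

variable {ι : Type*} [DecidableEq ι]

lemma inner_sub_smul_single_of_apply_eq_zero [Fintype ι] {x : EuclideanSpace ℝ ι} {m : ι}
    (hx : x m = 0) (o : EuclideanSpace ℝ ι) (c : ℝ) :
    ⟪x, o - c • EuclideanSpace.single m (1 : ℝ)⟫ = ⟪x, o⟫ := by
  simp [inner_sub_right, real_inner_smul_right, EuclideanSpace.inner_single_right, hx]

lemma sub_two_mul_smul_single_ne_self {o : EuclideanSpace ℝ ι} {m : ι} (hom : o m ≠ 0) :
    o - (2 * o m) • EuclideanSpace.single m (1 : ℝ) ≠ o := by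
  intro h
  have hm := congrArg (fun v : EuclideanSpace ℝ ι => v m) h
  simp only [PiLp.sub_apply, PiLp.smul_apply, PiLp.single_apply, if_true,
    smul_eq_mul, mul_one] at hm
  exact hom (by linarith)

lemma mem_openCap_reflect_of_apply_eq_zero [Fintype ι] {o x : EuclideanSpace ℝ ι} {r : ℝ}
    {m : ι} (hx : x ∈ openCap o r) (hxm : x m = 0) :
    x ∈ openCap (o - (2 * o m) • EuclideanSpace.single m (1 : ℝ)) r :=
  ⟨hx.1, by rw [inner_sub_smul_single_of_apply_eq_zero hxm]; exact hx.2⟩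

end Reflection

theorem cap_offCenter_reflection_overlap_general {d : ℕ} (m : Fin d) :
    (∀ (o : EuclideanSpace ℝ (Fin d)) (r : ℝ), ‖o‖ = 1 → r ∈ Set.Ioo 0 (Real.pi / 2) →
      o m ≠ 0 →
      ({x : EuclideanSpace ℝ (Fin d) | ‖x‖ = 1 ∧ Real.cos r < ⟪x, o⟫} ∩
        {x : EuclideanSpace ℝ (Fin d) | ‖x‖ = 1 ∧ x m = 0}).Nonempty →
      ({x : EuclideanSpace ℝ (Fin d) | ‖x‖ = 1 ∧ Real.cos r < ⟪x, o⟫} ∩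
        {x : EuclideanSpace ℝ (Fin d) | ‖x‖ = 1 ∧
          Real.cos r < ⟪x, o - (2 * o m) • EuclideanSpace.single m (1 : ℝ)⟫}).Nonempty) ∧
    (∀ (I : Type) (o : I → EuclideanSpace ℝ (Fin d)) (r : I → ℝ),
      (∀ i, ‖o i‖ = 1) → (∀ i, r i ∈ Set.Ioo 0 (Real.pi / 2)) →
      (∀ i j, i ≠ j → Disjoint
        {x : EuclideanSpace ℝ (Fin d) | ‖x‖ = 1 ∧ Real.cos (r i) < ⟪x, o i⟫}
        {x : EuclideanSpace ℝ (Fin d) | ‖x‖ = 1 ∧ Real.cos (r j) < ⟪x, o j⟫}) →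
      (∀ i, ∃ j, o j = o i - (2 * o i m) • EuclideanSpace.single m (1 : ℝ) ∧ r j = r i) →
      ∀ i, ({x : EuclideanSpace ℝ (Fin d) | ‖x‖ = 1 ∧ Real.cos (r i) < ⟪x, o i⟫} ∩
          {x : EuclideanSpace ℝ (Fin d) | ‖x‖ = 1 ∧ x m = 0}).Nonempty →
        o i m = 0) := by
  refine ⟨fun o r _ _ _ ⟨x, hx, _, hxm⟩ ↦
    ⟨x, hx, mem_openCap_reflect_of_apply_eq_zero (o := o) hx hxm⟩, ?_⟩
  rintro I o r - - hdisj hsym i ⟨x, hx, -, hxm⟩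
  by_contra hom
  obtain ⟨j, hoj, hrj⟩ := hsym i
  have hij : i ≠ j := by rintro rfl; exact sub_two_mul_smul_single_ne_self hom hoj.symm
  have hxj : x ∈ openCap (o j) (r j) := by
    rw [hoj, hrj]
    exact mem_openCap_reflect_of_apply_eq_zero (o := o i) hx hxm
  exact (hdisj i j hij).ne_of_mem hx hxj rfl

/-- Let `C(o, r)` be a closed spherical cap on `S^{d-1} ⊂ E^d` and let `σ_m`
be the reflection negating the `m`-th coordinate. (1) If `o_m ≠ 0` and the interior of the cap
meets the coordinate greatsphere `G_m = {x ∈ S^{d-1} : x_m = 0}`, then the interiors of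
`C(o, r)` and of the reflected cap `C(σ_m o, r)` intersect. (2) Consequently, in a packing of
caps invariant under `σ_m`, every cap whose interior meets `G_m` has its center on `G_m`. -/
theorem cap_offCenter_reflection_overlap {d : ℕ} (hd : 2 ≤ d) (m : Fin d) :
    (∀ (o : EuclideanSpace ℝ (Fin d)) (r : ℝ), ‖o‖ = 1 → r ∈ Set.Ioo 0 (Real.pi / 2) →
      o m ≠ 0 →
      ({x : EuclideanSpace ℝ (Fin d) | ‖x‖ = 1 ∧ Real.cos r < ⟪x, o⟫} ∩
        {x : EuclideanSpace ℝ (Fin d) | ‖x‖ = 1 ∧ x m = 0}).Nonempty →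
      ({x : EuclideanSpace ℝ (Fin d) | ‖x‖ = 1 ∧ Real.cos r < ⟪x, o⟫} ∩
        {x : EuclideanSpace ℝ (Fin d) | ‖x‖ = 1 ∧
          Real.cos r < ⟪x, o - (2 * o m) • EuclideanSpace.single m (1 : ℝ)⟫}).Nonempty) ∧
    (∀ (I : Type) (o : I → EuclideanSpace ℝ (Fin d)) (r : I → ℝ),
      (∀ i, ‖o i‖ = 1) → (∀ i, r i ∈ Set.Ioo 0 (Real.pi / 2)) →
      (∀ i j, i ≠ j → Disjoint
        {x : EuclideanSpace ℝ (Fin d) | ‖x‖ = 1 ∧ Real.cos (r i) < ⟪x, o i⟫}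
        {x : EuclideanSpace ℝ (Fin d) | ‖x‖ = 1 ∧ Real.cos (r j) < ⟪x, o j⟫}) →
      (∀ i, ∃ j, o j = o i - (2 * o i m) • EuclideanSpace.single m (1 : ℝ) ∧ r j = r i) →
      ∀ i, ({x : EuclideanSpace ℝ (Fin d) | ‖x‖ = 1 ∧ Real.cos (r i) < ⟪x, o i⟫} ∩
          {x : EuclideanSpace ℝ (Fin d) | ‖x‖ = 1 ∧ x m = 0}).Nonempty →
        o i m = 0) :=
  cap_offCenter_reflection_overlap_general m
end

section
/- Let r_1, r_2, δ be real numbers with 0 < r_2 ≤ r_1 ≤ π/4 and r_1 + r_2 ≤ δ ≤ π/2. Then sin(r_2)/sin(δ) ≤ 1/(2 cos r_1) ≤ 1/√2. Moreover, sin(r_2)/sin(δ) = 1/√2 holds only if r_1 = r_2 = π/4 and δ = π/2. -/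
open Real

/-- For `0 < r₂ ≤ r₁ ≤ π/4` and `r₁ + r₂ ≤ δ ≤ π/2` we have
`sin r₂ / sin δ ≤ 1/(2 cos r₁) ≤ 1/√2`, with `sin r₂ / sin δ = 1/√2` only if
`r₁ = r₂ = π/4` and `δ = π/2`. -/
theorem viewAngle_estimate_small_rmax (r₁ r₂ δ : ℝ)
    (hr₂ : 0 < r₂) (hr₂₁ : r₂ ≤ r₁) (hr₁ : r₁ ≤ Real.pi / 4)
    (hδ₁ : r₁ + r₂ ≤ δ) (hδ₂ : δ ≤ Real.pi / 2) :
    Real.sin r₂ / Real.sin δ ≤ 1 / (2 * Real.cos r₁) ∧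
    1 / (2 * Real.cos r₁) ≤ 1 / Real.sqrt 2 ∧
    (Real.sin r₂ / Real.sin δ = 1 / Real.sqrt 2 →
      r₁ = Real.pi / 4 ∧ r₂ = Real.pi / 4 ∧ δ = Real.pi / 2) := by
  have hpi := Real.pi_pos
  have hr₁pos : 0 < r₁ := hr₂.trans_le hr₂₁
  have hr₁lt : r₁ < π / 2 := lt_of_le_of_lt hr₁ (by linarith)
  have hr₂lt : r₂ < π / 2 := lt_of_le_of_lt (hr₂₁.trans hr₁) (by linarith)
  have hcos₁ : 0 < Real.cos r₁ := Real.cos_pos_of_mem_Ioo ⟨by linarith, hr₁lt⟩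
  have hcos₂ : 0 < Real.cos r₂ := Real.cos_pos_of_mem_Ioo ⟨by linarith, hr₂lt⟩
  have hδpos : 0 < δ := by linarith
  have hsinδ : 0 < Real.sin δ := Real.sin_pos_of_pos_of_lt_pi hδpos (by linarith)
  have hsin₂ : 0 < Real.sin r₂ := Real.sin_pos_of_pos_of_lt_pi hr₂ (by linarith)
  -- sin δ ≥ sin (r₁+r₂)
  have hmono : Real.sin (r₁ + r₂) ≤ Real.sin δ :=
    Real.strictMonoOn_sin.monotoneOn ⟨by linarith, by linarith⟩ ⟨by linarith, hδ₂⟩ hδ₁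
  -- sin r₂ cos r₁ ≤ sin r₁ cos r₂
  have hcross : Real.sin r₂ * Real.cos r₁ ≤ Real.sin r₁ * Real.cos r₂ := by
    have hs : Real.sin r₂ ≤ Real.sin r₁ :=
      Real.strictMonoOn_sin.monotoneOn ⟨by linarith, le_of_lt hr₂lt⟩
        ⟨by linarith, le_of_lt hr₁lt⟩ hr₂₁
    have hc : Real.cos r₁ ≤ Real.cos r₂ :=
      Real.cos_le_cos_of_nonneg_of_le_pi (le_of_lt hr₂) (by linarith) hr₂₁
    nlinarith
  have hsum : 2 * Real.cos r₁ * Real.sin r₂ ≤ Real.sin (r₁ + r₂) := by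
    rw [Real.sin_add]; nlinarith
  have h1 : Real.sin r₂ / Real.sin δ ≤ 1 / (2 * Real.cos r₁) := by
    rw [div_le_div_iff₀ hsinδ (by positivity)]
    nlinarith
  have hsqrt2 : Real.sqrt 2 ≤ 2 * Real.cos r₁ := by
    have : Real.cos (π / 4) ≤ Real.cos r₁ :=
      Real.cos_le_cos_of_nonneg_of_le_pi (le_of_lt hr₁pos) (by linarith) hr₁
    rw [Real.cos_pi_div_four] at this
    linarith
  have hsqrt2pos : (0:ℝ) < Real.sqrt 2 := by positivity
  have h2 : 1 / (2 * Real.cos r₁) ≤ 1 / Real.sqrt 2 :=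
    one_div_le_one_div_of_le hsqrt2pos hsqrt2
  refine ⟨h1, h2, fun heq => ?_⟩
  -- equality case
  have hδeq : Real.sin δ = Real.sqrt 2 * Real.sin r₂ := by
    field_simp at heq
    linarith [heq]
  have h2' : Real.sqrt 2 * Real.sqrt 2 = 2 := Real.mul_self_sqrt (by norm_num)
  -- chain: √2 sin r₂ = sin δ ≥ sin(r₁+r₂) ≥ 2 cos r₁ sin r₂ ≥ √2 sin r₂
  have hge : Real.sqrt 2 * Real.sin r₂ ≤ 2 * Real.cos r₁ * Real.sin r₂ := by
    nlinarith
  have hcoseq : Real.cos r₁ = Real.sqrt 2 / 2 := by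
    nlinarith [hmono, hsum, hδeq]
  have hr₁eq : r₁ = π / 4 :=
    Real.injOn_cos ⟨le_of_lt hr₁pos, by linarith⟩ ⟨by linarith, by linarith⟩
      (by rw [hcoseq, Real.cos_pi_div_four])
  have h2c : 2 * Real.cos r₁ * Real.sin r₂ = Real.sqrt 2 * Real.sin r₂ := by
    rw [hcoseq]; ring
  have hsineq : Real.sin (r₁ + r₂) = 2 * Real.cos r₁ * Real.sin r₂ := by
    linarith [hmono, hsum]
  have hdiff : Real.sin (r₁ - r₂) = 0 := by
    rw [Real.sin_sub]
    rw [Real.sin_add] at hsineq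
    linarith
  have hr₁₂ : r₁ = r₂ := by
    have := (Real.sin_eq_zero_iff_of_lt_of_lt (x := r₁ - r₂) (by linarith) (by linarith)).1 hdiff
    linarith
  have hr₂eq : r₂ = π / 4 := by rw [← hr₁₂, hr₁eq]
  have hδfinal : δ = π / 2 := by
    have : Real.sin δ = 1 := by
      rw [hδeq, hr₂eq, Real.sin_pi_div_four]
      rw [show Real.sqrt 2 * (Real.sqrt 2 / 2) = Real.sqrt 2 * Real.sqrt 2 / 2 by ring, h2']
      norm_num
    exact Real.injOn_sin ⟨by linarith, hδ₂⟩ ⟨by linarith, le_refl _⟩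
      (by rw [this, Real.sin_pi_div_two])
  exact ⟨hr₁eq, hr₂eq, hδfinal⟩
end

section
/- Let r_1, r_2, δ be real numbers with π/4 < r_1 < π/2, 0 < r_2 ≤ π/2 - r_1, and r_1 + r_2 ≤ δ ≤ π/2. Then sin(r_2)/sin(δ) < 1/√2. -/
/-- For `π/4 < r₁ < π/2`, `0 < r₂ ≤ π/2 - r₁` and `r₁ + r₂ ≤ δ ≤ π/2`
we have `sin r₂ / sin δ < 1/√2`. -/
theorem viewAngle_estimate_large_rmax (r₁ r₂ δ : ℝ)
    (hr₁l : Real.pi / 4 < r₁) (hr₁u : r₁ < Real.pi / 2)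
    (hr₂ : 0 < r₂) (hr₂u : r₂ ≤ Real.pi / 2 - r₁)
    (hδ₁ : r₁ + r₂ ≤ δ) (hδ₂ : δ ≤ Real.pi / 2) :
    Real.sin r₂ / Real.sin δ < 1 / Real.sqrt 2 := by
  have hπ := Real.pi_pos
  have hs2 : (0:ℝ) < Real.sqrt 2 := by positivity
  have hs2sq : Real.sqrt 2 * Real.sqrt 2 = 2 := Real.mul_self_sqrt (by norm_num)
  have hr₁0 : 0 < r₁ := lt_trans (by linarith) hr₁l
  have hsum : r₁ + r₂ ≤ Real.pi / 2 := le_trans hδ₁ hδ₂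
  -- cos r₁ < √2/2
  have hc : Real.cos r₁ < Real.sqrt 2 / 2 := by
    have := Real.cos_lt_cos_of_nonneg_of_le_pi (by positivity) (by linarith) hr₁l
    rwa [Real.cos_pi_div_four] at this
  -- sin r₂ ≤ cos r₁
  have hsr2 : Real.sin r₂ ≤ Real.cos r₁ := by
    have h := Real.strictMonoOn_sin.monotoneOn
      (Set.mem_Icc.2 ⟨by linarith, by linarith⟩)
      (Set.mem_Icc.2 ⟨by linarith, by linarith⟩) hr₂u
    rwa [Real.sin_pi_div_two_sub] at h
  -- cos r₂ ≥ sin r₁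
  have hcr2 : Real.sin r₁ ≤ Real.cos r₂ := by
    have h := Real.cos_le_cos_of_nonneg_of_le_pi (by linarith) (by linarith) hr₂u
    rwa [Real.cos_pi_div_two_sub] at h
  have hsr1 : Real.sqrt 2 / 2 < Real.sin r₁ := by
    have := Real.sin_lt_sin_of_lt_of_le_pi_div_two (x := Real.pi/4) (by linarith) (le_of_lt hr₁u) hr₁l
    rwa [Real.sin_pi_div_four] at this
  have hsinsum_pos : 0 < Real.sin (r₁ + r₂) :=
    Real.sin_pos_of_pos_of_lt_pi (by linarith) (by linarith)
  have hsinδ : Real.sin (r₁ + r₂) ≤ Real.sin δ := by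
    exact Real.strictMonoOn_sin.monotoneOn
      ⟨by linarith, hsum⟩ ⟨by linarith, hδ₂⟩ hδ₁
  have hsinδ_pos : 0 < Real.sin δ := lt_of_lt_of_le hsinsum_pos hsinδ
  have hsr2pos : 0 < Real.sin r₂ :=
    Real.sin_pos_of_pos_of_lt_pi hr₂ (by linarith)
  have hcr1pos : 0 < Real.cos r₁ := Real.cos_pos_of_mem_Ioo ⟨by linarith, hr₁u⟩
  -- key: √2 * sin r₂ < sin (r₁ + r₂)
  have hkey : Real.sqrt 2 * Real.sin r₂ < Real.sin (r₁ + r₂) := by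
    rw [Real.sin_add]
    have hpyth := Real.sin_sq_add_cos_sq r₁
    nlinarith [mul_pos hsr2pos hcr1pos, sq_nonneg (Real.sin r₂ - Real.cos r₁),
      mul_le_mul_of_nonneg_left hcr2 (le_of_lt (lt_trans (by positivity) hsr1)),
      mul_le_mul_of_nonneg_right hsr2 (le_of_lt hcr1pos)]
  calc Real.sin r₂ / Real.sin δ ≤ Real.sin r₂ / Real.sin (r₁ + r₂) := by
        exact div_le_div_of_nonneg_left (le_of_lt hsr2pos) hsinsum_pos hsinδ
    _ < 1 / Real.sqrt 2 := by
        rw [div_lt_div_iff₀ hsinsum_pos hs2]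
        nlinarith [hkey]
end

section
/- Let w_1, …, w_d be an orthonormal basis of E^d (d ≥ 2), let o ∈ S^{d-1} be a unit vector and r ∈ (0, π/2). If the closed spherical cap C(o, r) meets each of the d pairwise orthogonal greatspheres G_{w_i} = {x ∈ S^{d-1} : ⟨x, w_i⟩ = 0} for i = 1, …, d, then sin r ≥ 1/√d. -/
open scoped RealInnerProductSpace

/-- If a closed spherical cap `C(o, r)` on `S^{d-1} ⊂ E^d` meets each of the
`d` pairwise orthogonal greatspheres `G_{w_i} = {x ∈ S^{d-1} : ⟪x, w_i⟫ = 0}` determined by an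
orthonormal basis `w_1, …, w_d`, then `sin r ≥ 1/√d`. -/
theorem cap_meeting_d_orthogonal_greatspheres {d : ℕ} (hd : 2 ≤ d)
    (b : OrthonormalBasis (Fin d) ℝ (EuclideanSpace ℝ (Fin d)))
    (o : EuclideanSpace ℝ (Fin d)) (ho : ‖o‖ = 1)
    (r : ℝ) (hr : r ∈ Set.Ioo 0 (Real.pi / 2))
    (hmeets : ∀ i : Fin d,
      ({x : EuclideanSpace ℝ (Fin d) | ‖x‖ = 1 ∧ Real.cos r ≤ ⟪x, o⟫} ∩
        {x : EuclideanSpace ℝ (Fin d) | ‖x‖ = 1 ∧ ⟪x, b i⟫ = 0}).Nonempty) :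
    1 / Real.sqrt d ≤ Real.sin r := by
  obtain ⟨hr0, hr2⟩ := hr
  have hsin : 0 < Real.sin r := Real.sin_pos_of_pos_of_lt_pi hr0
    (lt_trans hr2 (by linarith [Real.pi_pos]))
  -- key bound on each coordinate of o
  have key : ∀ i : Fin d, ⟪o, b i⟫ ^ 2 ≤ Real.sin r ^ 2 := by
    intro i
    obtain ⟨x, ⟨hx1, hxr⟩, _, hxi⟩ := hmeets i
    set c : ℝ := ⟪o, b i⟫ with hc
    have hbi : ‖b i‖ = 1 := b.orthonormal.1 i
    have hxo : ⟪x, o⟫ = ⟪x, o - c • b i⟫ := by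
      rw [inner_sub_right, inner_smul_right, hxi]; ring
    have hnorm_sq : ‖o - c • b i‖ ^ 2 = 1 - c ^ 2 := by
      rw [norm_sub_sq_real, norm_smul, inner_smul_right, hbi, ho, ← hc, Real.norm_eq_abs, mul_one, sq_abs]
      ring
    have hcs : ⟪x, o - c • b i⟫ ≤ ‖o - c • b i‖ := by
      calc ⟪x, o - c • b i⟫ ≤ ‖x‖ * ‖o - c • b i‖ := real_inner_le_norm _ _
        _ = ‖o - c • b i‖ := by rw [hx1, one_mul]
    have hcos : Real.cos r ≤ ‖o - c • b i‖ := le_trans hxr (hxo ▸ hcs)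
    have hcos0 : 0 ≤ Real.cos r := Real.cos_nonneg_of_mem_Icc
      ⟨by linarith, le_of_lt hr2⟩
    have : Real.cos r ^ 2 ≤ 1 - c ^ 2 := by
      rw [← hnorm_sq]
      exact pow_le_pow_left₀ hcos0 hcos 2
    nlinarith [Real.sin_sq_add_cos_sq r]
  have parseval : ∑ i : Fin d, ⟪o, b i⟫ ^ 2 = 1 := by
    have := b.sum_inner_mul_inner o o
    rw [real_inner_self_eq_norm_sq, ho] at this
    calc ∑ i : Fin d, ⟪o, b i⟫ ^ 2 = ∑ i : Fin d, ⟪o, b i⟫ * ⟪b i, o⟫ := by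
          refine Finset.sum_congr rfl fun i _ => ?_
          rw [real_inner_comm (b i) o]; ring
      _ = 1 := by rw [this]; norm_num
  have hsum : (1 : ℝ) ≤ d * Real.sin r ^ 2 := by
    calc (1 : ℝ) = ∑ i : Fin d, ⟪o, b i⟫ ^ 2 := parseval.symm
      _ ≤ ∑ _i : Fin d, Real.sin r ^ 2 := Finset.sum_le_sum fun i _ => key i
      _ = d * Real.sin r ^ 2 := by simp [Finset.sum_const]
  have hd0 : (0 : ℝ) < d := by positivity
  rw [div_le_iff₀ (Real.sqrt_pos.mpr hd0)]
  nlinarith [Real.sq_sqrt hd0.le, hsum, mul_nonneg hsin.le (Real.sqrt_nonneg (d : ℝ))]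
end
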